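/- arXiv:1710.01899 — 7 statements merged into one kernel-verified Lean document; each statement's English description precedes it below -/
import Mathlib

section
/- For an ordered set partition T = (S_1,...,S_k) of [d+1], define e_T = ∑_{i=1}^k i·e_{S_i} ∈ ℝ^{d+1}. Fix (π,τ) ∈ S_{d+1} × S_d, and let T(π,τ;r) denote the rank-r element of the maximal chain ch(π,τ) in O_{d+1} (obtained from the singleton partition ordered by π by removing the bars labeled 1,...,r under τ). Then for each 1 ≤ r ≤ d, e_{T(π,τ;r-1)} − e_{T(π,τ;r)} = e_{Γ^π_{τ^{-1}(r)}}, where Γ^π_i = {π^{-1}(j) : i < j ≤ d+1}. -/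
/-! The coordinate of `e_{T(π,τ;r)}` at `x` is one plus the number of bars to the left of `x`
whose label is at least `r`. Passing from `r` to `r + 1` removes exactly the bar labelled `r`,
which sits at position `τ⁻¹ r` and is to the left of `x` iff `τ⁻¹ r < π x`. -/

/-- `eTvec d π τ r` is the vector `e_{T(π,τ;r)} = ∑ᵢ i·e_{Sᵢ}` of the rank-`r` element of
the maximal chain `ch(π,τ)` in the ordered set partition poset `O_{d+1}` (0-indexed: the
diagram places `π⁻¹(0),…,π⁻¹(d)` in order, the bar in position `j` carries label `τ(j)`,
and the rank-`r` partition is obtained by removing the bars with label `< r`; the coordinate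
at `x` is the 1-based index of the block containing `x`). -/
noncomputable def eTvec (d : ℕ) (π : Equiv.Perm (Fin (d+1))) (τ : Equiv.Perm (Fin d))
    (r : ℕ) : Fin (d+1) → ℝ :=
  fun x => 1 + ((Finset.univ.filter
    fun j : Fin d => (j : ℕ) < (π x : ℕ) ∧ r ≤ (τ j : ℕ)).card : ℝ)

open Finset

theorem Finset.card_filter_le_eq_card_filter_succ_le_add {α : Type*} [DecidableEq α]
    (s : Finset α) (f : α → ℕ) (r : ℕ) :
    #{a ∈ s | r ≤ f a} = #{a ∈ s | r + 1 ≤ f a} + #{a ∈ s | f a = r} := by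
  rw [← card_union_of_disjoint (disjoint_filter.mpr fun _ _ h h' => by omega), ← filter_or]
  exact congrArg card (filter_congr fun _ _ => by omega)

theorem Finset.card_filter_apply_eq {α β : Type*} [DecidableEq α] [DecidableEq β]
    (s : Finset α) (e : α ≃ β) (b : β) :
    #{a ∈ s | e a = b} = if e.symm b ∈ s then 1 else 0 := by
  simp_rw [← Equiv.eq_symm_apply, filter_eq']
  split_ifs <;> simp

theorem eTvec_apply (d : ℕ) (π : Equiv.Perm (Fin (d+1))) (τ : Equiv.Perm (Fin d)) (r : ℕ)
    (x : Fin (d+1)) :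
    eTvec d π τ r x = 1 + #{j ∈ {j : Fin d | (j : ℕ) < π x} | r ≤ τ j} := by
  rw [eTvec, filter_filter]

/-- Lemma `lem:diff`: consecutive elements of the maximal chain `ch(π,τ)` satisfy
`e_{T(π,τ;r-1)} − e_{T(π,τ;r)} = e_{Γ^π_{τ⁻¹(r)}}`, where
`Γ^π_i = {π⁻¹(j) : i < j ≤ d+1}`. (0-indexed formulation: for each label `r : Fin d`,
the rank-`r` and rank-`(r+1)` vectors differ by the indicator of
`{x : τ⁻¹(r) < π(x)}`.) -/
theorem eTvec_consecutive_difference (d : ℕ) (π : Equiv.Perm (Fin (d+1)))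
    (τ : Equiv.Perm (Fin d)) (r : Fin d) :
    (fun x => eTvec d π τ (r : ℕ) x - eTvec d π τ ((r : ℕ) + 1) x)
      = fun x => if ((τ⁻¹ r : Fin d) : ℕ) < ((π x : Fin (d+1)) : ℕ) then (1:ℝ) else 0 := by
  funext x
  have hlabel : #{j ∈ {j : Fin d | (j : ℕ) < π x} | (τ j : ℕ) = r}
      = if ((τ⁻¹ r : Fin d) : ℕ) < π x then 1 else 0 := by
    simp_rw [Fin.val_inj, card_filter_apply_eq, mem_filter, mem_univ, true_and,
      Equiv.Perm.inv_def]
  rw [eTvec_apply, eTvec_apply, card_filter_le_eq_card_filter_succ_le_add, hlabel]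
  split_ifs <;> push_cast <;> ring
end

section
/- The map (π,τ) ↦ ch(π,τ) is a bijection from S_{d+1} × S_d to the set of maximal chains of the ordered set partition poset O_{d+1}. In particular, the number of maximal chains of O_{d+1} is (d+1)!·d!. -/
/-- `IsTotalPreorder X r` means that the binary relation `r` on `X` is total and a preorder.
(Removed from Mathlib; restored here with its old definition.) -/
class IsTotalPreorder (α : Sort*) (r : α → α → Prop) : Prop extends IsTrans α r, Std.Total r

/-- Ordered set partitions of `[n]`, encoded as total preorders on `Fin n`. -/
def OSP (n : ℕ) : Type := {r : Fin n → Fin n → Prop // IsTotalPreorder (Fin n) r}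

/-- The refinement order on ordered set partitions. -/
instance OSP.instPartialOrder (n : ℕ) : PartialOrder (OSP n) where
  le T T' := ∀ a b, T.1 a b → T'.1 a b
  le_refl _ _ _ h := h
  le_trans _ _ _ h1 h2 a b hab := h2 a b (h1 a b hab)
  le_antisymm T U h1 h2 := Subtype.ext (by
    funext a b
    exact propext ⟨h1 a b, h2 a b⟩)

/-- The (0-based) block index in the rank-`r` element `T(π,τ;r)` of the chain `ch(π,τ)`:
the diagram places `π⁻¹(0),…,π⁻¹(d)` in order with the bar in position `j` labeled `τ(j)`,
and `T(π,τ;r)` is obtained by removing the bars with label `< r`. -/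
def blk (d : ℕ) (π : Equiv.Perm (Fin (d+1))) (τ : Equiv.Perm (Fin d)) (r : ℕ)
    (x : Fin (d+1)) : ℕ :=
  (Finset.univ.filter fun j : Fin d => (j : ℕ) < (π x : ℕ) ∧ r ≤ (τ j : ℕ)).card

/-- The rank-`r` element `T(π,τ;r)` of the maximal chain `ch(π,τ)` in `O_{d+1}`. -/
def chElem (d : ℕ) (π : Equiv.Perm (Fin (d+1))) (τ : Equiv.Perm (Fin d)) (r : ℕ) :
    OSP (d+1) :=
  ⟨fun a b => blk d π τ r a ≤ blk d π τ r b,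
    { trans := fun _ _ _ => Nat.le_trans, total := fun _ _ => Nat.le_total _ _ }⟩

/-- The maximal chain `ch(π,τ) = {T(π,τ;r) : 0 ≤ r ≤ d}` in `O_{d+1}`. -/
def chSet (d : ℕ) (π : Equiv.Perm (Fin (d+1))) (τ : Equiv.Perm (Fin d)) :
    Set (OSP (d+1)) :=
  {T | ∃ r ≤ d, T = chElem d π τ r}

/-!
An ordered set partition refined by the linear order `π` is determined by the set of bars of
`π` it has removed, and refinement is inclusion of these sets: the interval above `π` in
`O_{d+1}` is the Boolean lattice of subsets of the `d` bars. Every ordered set partition has a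
linear refinement, so the least element of a maximal chain is some `π`, and maximal chains of
`O_{d+1}` correspond to pairs of `π` and a maximal chain of subsets of the bars. The latter are
exactly the sublevel sets `{j | τ j < r}` of a unique bijection `τ`, recording the order in which
the bars are removed.
-/

open Function

section MaxChainTransfer

open Set

variable {α β : Type*} [PartialOrder α] [PartialOrder β]

theorem IsChain.subset_Ici_of_isMin {c : Set α} (hc : IsChain (· ≤ ·) c) {a : α}
    (ha : IsMin a) (hac : a ∈ c) : c ⊆ Ici a := fun _ hx =>
  (hc.total hac hx).elim id fun h => ha h

theorem IsMaxChain.mem_of_forall_le_or_ge {c : Set α} (hc : IsMaxChain (· ≤ ·) c) {a : α}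
    (h : ∀ x ∈ c, a ≤ x ∨ x ≤ a) : a ∈ c :=
  (hc.2 (hc.1.insert fun x hx _ => h x hx) (subset_insert _ _)).symm ▸ mem_insert _ _

theorem IsChain.exists_isLeast {c : Set α} (hc : IsChain (· ≤ ·) c) (hfin : c.Finite)
    (hne : c.Nonempty) : ∃ m, IsLeast c m := by
  obtain ⟨m, hm⟩ := hfin.exists_minimal hne
  exact ⟨m, hm.prop, fun x hx => (hc.total hm.prop hx).elim id (hm.le_of_le hx)⟩

variable [OrderBot β] (f : β ↪o α)

theorem IsChain.subset_range_of_bot_mem (hmin : IsMin (f ⊥)) (hrange : Ici (f ⊥) ⊆ range f)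
    {t : Set α} (ht : IsChain (· ≤ ·) t) (hbot : f ⊥ ∈ t) : t ⊆ range f :=
  (ht.subset_Ici_of_isMin hmin hbot).trans hrange

theorem IsMaxChain.image_orderEmbedding (hmin : IsMin (f ⊥)) (hrange : Ici (f ⊥) ⊆ range f)
    {c : Set β} (hc : IsMaxChain (· ≤ ·) c) : IsMaxChain (· ≤ ·) (f '' c) := by
  refine ⟨hc.1.image f, fun t ht hct => ?_⟩
  have htf : t ⊆ range f :=
    ht.subset_range_of_bot_mem f hmin hrange (hct (mem_image_of_mem f hc.bot_mem))
  have hc_eq : c = f ⁻¹' t :=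
    hc.2 (ht.preimage_relEmbedding f) fun x hx => hct (mem_image_of_mem f hx)
  rw [hc_eq, image_preimage_eq_of_subset htf]

theorem IsMaxChain.exists_image_orderEmbedding_eq (hmin : IsMin (f ⊥))
    (hrange : Ici (f ⊥) ⊆ range f) {c : Set α} (hc : IsMaxChain (· ≤ ·) c)
    (hbot : f ⊥ ∈ c) : ∃ c' : Set β, IsMaxChain (· ≤ ·) c' ∧ f '' c' = c := by
  have hcf : c ⊆ range f := hc.1.subset_range_of_bot_mem f hmin hrange hbot
  refine ⟨f ⁻¹' c, ⟨hc.1.preimage_relEmbedding f, fun t ht hct => ?_⟩,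
    image_preimage_eq_of_subset hcf⟩
  have himage : c = f '' t := hc.2 (ht.image f) <| by
    rw [← image_preimage_eq_of_subset hcf]; exact image_mono hct
  rw [himage, preimage_image_eq _ f.injective]

end MaxChainTransfer

open Finset in
theorem IsChain.subset_of_card_le {α : Type*} {c : Set (Finset α)} (hc : IsChain (· ≤ ·) c)
    {S T : Finset α} (hS : S ∈ c) (hT : T ∈ c) (h : #S ≤ #T) : S ⊆ T :=
  (hc.total hS hT).elim id fun hTS => (eq_of_subset_of_card_le hTS h).ge

section Sublevel

open Finset

variable {α : Type*} [Fintype α] {d : ℕ}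

def sublevel (τ : α ≃ Fin d) (r : ℕ) : Finset α := {j | (τ j : ℕ) < r}

def sublevelChain (τ : α ≃ Fin d) : Set (Finset α) := {S | ∃ r ≤ d, S = sublevel τ r}

theorem card_sublevel (τ : α ≃ Fin d) (r : ℕ) : #(sublevel τ r) = min d r :=
  (card_equiv τ (by simp [sublevel])).trans Fin.card_filter_val_lt

theorem sublevel_succ [DecidableEq α] (τ : α ≃ Fin d) (k : Fin d) :
    sublevel τ (k + 1) = insert (τ.symm k) (sublevel τ k) := by
  ext j
  simp only [sublevel, mem_filter_univ, mem_insert, Equiv.eq_symm_apply, Fin.ext_iff]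
  omega

theorem sublevelChain_eq_range (τ : α ≃ Fin d) :
    sublevelChain τ = Set.range fun r : Fin (d + 1) => sublevel τ r := by
  ext S
  simp only [sublevelChain, Set.mem_range]
  constructor
  · rintro ⟨r, hr, rfl⟩
    exact ⟨⟨r, by omega⟩, rfl⟩
  · rintro ⟨r, rfl⟩
    exact ⟨r, r.is_le, rfl⟩

theorem isMaxChain_sublevelChain [DecidableEq α] (τ : α ≃ Fin d) :
    IsMaxChain (· ≤ ·) (sublevelChain τ) := by
  rw [sublevelChain_eq_range]
  refine IsMaxChain.range_fin_of_covBy ?_ ?_ fun k => ?_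
  · simp [sublevel]
  · simp [sublevel]
  · simp only [Fin.val_succ, Fin.val_castSucc, sublevel_succ]
    exact wcovBy_insert _ _

theorem sublevelChain_injective :
    Injective (sublevelChain : (α ≃ Fin d) → Set (Finset α)) := by
  intro τ τ' h
  have hsub : ∀ r ≤ d, sublevel τ r = sublevel τ' r := by
    intro r hr
    obtain ⟨r', hr', heq⟩ : sublevel τ r ∈ sublevelChain τ' := h ▸ ⟨r, hr, rfl⟩
    have hcard := congrArg card heq
    rw [card_sublevel, card_sublevel] at hcard
    rw [heq, show r = r' by omega]
  have hlt : ∀ j, ∀ r ≤ d, ((τ j : ℕ) < r ↔ (τ' j : ℕ) < r) := fun j r hr => by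
    simpa [sublevel] using congrArg (j ∈ ·) (hsub r hr)
  ext j
  have h₁ := (hlt j (τ j + 1) (τ j).isLt).1 (Nat.lt_succ_self _)
  have h₂ := (hlt j (τ' j + 1) (τ' j).isLt).2 (Nat.lt_succ_self _)
  omega

theorem IsMaxChain.exists_card_eq [DecidableEq α] {c : Set (Finset α)}
    (hc : IsMaxChain (· ≤ ·) c) {k : ℕ} (hk : k ≤ Fintype.card α) :
    ∃ S ∈ c, #S = k := by
  by_contra! hno
  have h_empty : ∅ ∈ c := hc.bot_mem
  have h_univ : (univ : Finset α) ∈ c := hc.top_mem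
  -- A set of size `k` squeezed between the largest smaller member `U` and the smallest larger
  -- member `V` of `c` would be comparable with every member of `c`.
  obtain ⟨U, ⟨hUc, hUk⟩, hUmax⟩ := Set.exists_max_image {S | S ∈ c ∧ #S < k} card
    (Set.toFinite _) ⟨∅, h_empty, Nat.pos_of_ne_zero fun h => hno ∅ h_empty (by simp [h])⟩
  obtain ⟨V, ⟨hVc, hVk⟩, hVmin⟩ := Set.exists_min_image {S | S ∈ c ∧ k < #S} card
    (Set.toFinite _) ⟨univ, h_univ, lt_of_le_of_ne (by simpa using hk) (hno univ h_univ).symm⟩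
  obtain ⟨W, hUW, hWV, hWk⟩ :=
    exists_subsuperset_card_eq (hc.1.subset_of_card_le hUc hVc (by omega)) hUk.le hVk.le
  refine hno W (hc.mem_of_forall_le_or_ge fun T hT => ?_) hWk
  rcases lt_trichotomy #T k with hTk | hTk | hTk
  · exact Or.inr ((hc.1.subset_of_card_le hT hUc (hUmax T ⟨hT, hTk⟩)).trans hUW)
  · exact absurd hTk (hno T hT)
  · exact Or.inl (hWV.trans (hc.1.subset_of_card_le hVc hT (hVmin T ⟨hT, hTk⟩)))

theorem exists_sublevel_eq [DecidableEq α] {E : Fin (d + 1) → Finset α} (hE : Monotone E)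
    (hcard : ∀ k, #(E k) = k) (hd : Fintype.card α = d) :
    ∃ τ : α ≃ Fin d, ∀ r, E r = sublevel τ r := by
  have hstep : ∀ k : Fin d, ∃ x ∉ E k.castSucc, insert x (E k.castSucc) = E k.succ := fun k =>
    exists_eq_insert_iff.2 ⟨hE (Fin.castSucc_le_succ k), by simp [hcard]⟩
  choose x hx_notMem hx_insert using hstep
  have hx_mem : ∀ k l, k < l → x k ∈ E l.castSucc := fun k l hkl =>
    hE (Fin.succ_le_castSucc_iff.2 hkl) (hx_insert k ▸ mem_insert_self _ _)
  have hx_inj : Injective x := by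
    intro k l hkl
    by_contra hne
    rcases lt_or_gt_of_ne hne with h | h
    · exact hx_notMem l (hkl ▸ hx_mem k l h)
    · exact hx_notMem k (hkl ▸ hx_mem l k h)
  set τ : α ≃ Fin d := (Equiv.ofBijective x
    ((Fintype.bijective_iff_injective_and_card x).2 ⟨hx_inj, by simp [hd]⟩)).symm
  refine ⟨τ, Fin.induction ?_ fun k ih => ?_⟩
  · simpa [sublevel, ← card_eq_zero] using hcard 0
  · rw [← hx_insert, ih, Fin.val_succ, sublevel_succ]
    rfl

theorem IsMaxChain.exists_eq_sublevelChain [DecidableEq α] {c : Set (Finset α)}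
    (hc : IsMaxChain (· ≤ ·) c) (hd : Fintype.card α = d) :
    ∃ τ : α ≃ Fin d, c = sublevelChain τ := by
  choose E hEc hcard using fun k : Fin (d + 1) => hc.exists_card_eq (k := k) (by omega)
  obtain ⟨τ, hτ⟩ := exists_sublevel_eq
    (fun k l hkl => hc.1.subset_of_card_le (hEc k) (hEc l) (by simpa [hcard] using hkl)) hcard hd
  refine ⟨τ, ?_⟩
  rw [sublevelChain_eq_range]
  ext S
  constructor
  · intro hS
    have hSd : #S < d + 1 := Nat.lt_succ_of_le (hd ▸ card_le_univ S)
    refine ⟨⟨#S, hSd⟩, ?_⟩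
    show sublevel τ (⟨#S, hSd⟩ : Fin (d + 1)) = S
    rw [← hτ]
    exact eq_of_subset_of_card_le (hc.1.subset_of_card_le (hEc _) hS (by simp [hcard]))
      (by simp [hcard])
  · rintro ⟨r, rfl⟩
    show sublevel τ r ∈ c
    rw [← hτ]
    exact hEc r

end Sublevel

namespace OSP

open Finset

variable {n : ℕ}

theorem rel_refl (T : OSP n) (a : Fin n) : T.1 a a := (T.2.total a a).elim id id

theorem rel_trans (T : OSP n) {a b c : Fin n} : T.1 a b → T.1 b c → T.1 a c := T.2.trans a b c

theorem rel_total (T : OSP n) (a b : Fin n) : T.1 a b ∨ T.1 b a := T.2.total a b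

theorem ext {T U : OSP n} (h : ∀ a b, T.1 a b ↔ U.1 a b) : T = U :=
  Subtype.ext (funext₂ fun a b => propext (h a b))

instance : Finite (OSP n) := by unfold OSP; infer_instance

def ofRank {β : Type*} [LinearOrder β] (f : Fin n → β) : OSP n :=
  ⟨fun a b => f a ≤ f b, { trans := fun _ _ _ => le_trans, total := fun _ _ => le_total _ _ }⟩

instance : Nonempty (OSP n) := ⟨ofRank fun _ => 0⟩

def linear (π : Equiv.Perm (Fin n)) : OSP n := ofRank π

theorem linear_rel {π : Equiv.Perm (Fin n)} {a b : Fin n} : (linear π).1 a b ↔ π a ≤ π b :=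
  Iff.rfl

theorem isMin_linear (π : Equiv.Perm (Fin n)) : IsMin (linear π) := by
  intro T hT a b hab
  rcases T.rel_total a b with h | h
  · exact h
  · obtain rfl : a = b := π.injective (le_antisymm hab (hT b a h))
    exact h

theorem linear_injective : Injective (linear : Equiv.Perm (Fin n) → OSP n) := by
  intro π π' h
  have hle : ∀ a b, π a ≤ π b ↔ π' a ≤ π' b := fun a b =>
    iff_of_eq (congrArg (·.1 a b) h)
  let e : Fin n ≃o Fin n := ⟨π.symm.trans π', by simp [← hle]⟩
  refine Equiv.ext fun a => ?_
  simpa [e] using (congrArg (· (π a)) (Subsingleton.elim e (OrderIso.refl _))).symm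

open Classical in
noncomputable def rank (T : OSP n) (a : Fin n) : ℕ := #{b | T.1 b a}

theorem rank_le_rank_iff (T : OSP n) {a b : Fin n} : T.rank a ≤ T.rank b ↔ T.1 a b := by
  classical
  refine ⟨fun h => by_contra fun hab => h.not_gt <| card_lt_card ?_, fun hab => card_le_card ?_⟩
  · have hba := (T.rel_total a b).resolve_left hab
    refine (ssubset_iff_of_subset fun c hc => ?_).2 ⟨a, by simp [T.rel_refl], by simp [hab]⟩
    simp only [mem_filter, mem_univ, true_and] at hc ⊢
    exact T.rel_trans hc hba
  · intro c hc
    simp only [mem_filter, mem_univ, true_and] at hc ⊢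
    exact T.rel_trans hc hab

theorem exists_linear_le (T : OSP n) : ∃ π, linear π ≤ T := by
  refine ⟨(Tuple.sort T.rank).symm, fun a b hab => T.rank_le_rank_iff.1 ?_⟩
  simpa using Tuple.monotone_sort T.rank hab

theorem exists_linear_mem_of_isMaxChain {c : Set (OSP n)} (hc : IsMaxChain (· ≤ ·) c) :
    ∃ π, linear π ∈ c := by
  obtain ⟨m, hmc, hm⟩ := hc.1.exists_isLeast (Set.toFinite c) (hc.nonempty_iff.1 inferInstance)
  obtain ⟨π, hπ⟩ := m.exists_linear_le
  exact ⟨π, hc.mem_of_forall_le_or_ge fun x hx => Or.inl (hπ.trans (hm hx))⟩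

section Bars

variable {d : ℕ}

-- Bar `j : Fin d` of the word `π⁻¹ 0, …, π⁻¹ d` separates positions `j` and `j + 1`. In
-- `ofJoined π B` the bars in `B` are removed, and `x` lies in the block numbered by the remaining
-- bars to the left of its position `π x`.
def barsBelow (B : Finset (Fin d)) (i : ℕ) : ℕ := #{j : Fin d | (j : ℕ) < i ∧ j ∉ B}

theorem barsBelow_le_barsBelow_iff {B : Finset (Fin d)} {i i' : ℕ} :
    barsBelow B i ≤ barsBelow B i' ↔ ∀ j : Fin d, i' ≤ j → (j : ℕ) < i → j ∈ B := by
  refine ⟨fun h j hj hj' => by_contra fun hjB => h.not_gt (card_lt_card ?_),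
    fun h => card_le_card fun j hj => ?_⟩
  · refine (ssubset_iff_of_subset fun k hk => ?_).2 ⟨j, by simp [hj', hjB], by simp [hj]⟩
    simp only [mem_filter, mem_univ, true_and] at hk ⊢
    exact ⟨by omega, hk.2⟩
  · simp only [mem_filter, mem_univ, true_and] at hj ⊢
    exact ⟨by_contra fun hji' => hj.2 (h j (by omega) hj.1), hj.2⟩

def ofJoined (π : Equiv.Perm (Fin (d + 1))) (B : Finset (Fin d)) : OSP (d + 1) :=
  ofRank fun x => barsBelow B (π x)

variable {π : Equiv.Perm (Fin (d + 1))}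

theorem ofJoined_rel {B : Finset (Fin d)} {a b : Fin (d + 1)} :
    (ofJoined π B).1 a b ↔ ∀ j : Fin d, (π b : ℕ) ≤ j → (j : ℕ) < π a → j ∈ B :=
  barsBelow_le_barsBelow_iff

theorem ofJoined_rel_succ_castSucc {B : Finset (Fin d)} {j : Fin d} :
    (ofJoined π B).1 (π.symm j.succ) (π.symm j.castSucc) ↔ j ∈ B := by
  simp only [ofJoined_rel, Equiv.apply_symm_apply, Fin.val_succ, Fin.val_castSucc]
  refine ⟨fun h => h j le_rfl (Nat.lt_succ_self _), fun h k hjk hkj => ?_⟩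
  rwa [show k = j by omega]

theorem ofJoined_le_ofJoined_iff {B B' : Finset (Fin d)} :
    ofJoined π B ≤ ofJoined π B' ↔ B ⊆ B' :=
  ⟨fun h _ hj => ofJoined_rel_succ_castSucc.1 (h _ _ (ofJoined_rel_succ_castSucc.2 hj)),
    fun h _ _ hab => ofJoined_rel.2 fun j hj hj' => h (ofJoined_rel.1 hab j hj hj')⟩

theorem ofJoined_empty (π : Equiv.Perm (Fin (d + 1))) : ofJoined π ∅ = linear π := by
  refine ext fun a b => ?_
  simp only [ofJoined_rel, notMem_empty, imp_false, not_lt, linear_rel, Fin.le_iff_val_le_val]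
  refine ⟨fun h => ?_, fun h _ hj => le_trans h hj⟩
  by_contra! hba
  exact hba.not_ge (h ⟨π b, by omega⟩ le_rfl)

def ofJoinedEmb (π : Equiv.Perm (Fin (d + 1))) : Finset (Fin d) ↪o OSP (d + 1) :=
  OrderEmbedding.ofMapLEIff (ofJoined π) fun _ _ => ofJoined_le_ofJoined_iff

open Classical in
noncomputable def joined (π : Equiv.Perm (Fin (d + 1))) (T : OSP (d + 1)) : Finset (Fin d) :=
  {j | T.1 (π.symm j.succ) (π.symm j.castSucc)}

theorem rel_of_forall_rel_succ_castSucc (T : OSP (d + 1)) {a b : Fin (d + 1)} (hba : π b ≤ π a)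
    (h : ∀ j : Fin d, (π b : ℕ) ≤ j → (j : ℕ) < π a →
      T.1 (π.symm j.succ) (π.symm j.castSucc)) :
    T.1 a b := by
  suffices ∀ k, (π b : ℕ) ≤ k → ∀ hk : k < d + 1, k ≤ π a →
      T.1 (π.symm ⟨k, hk⟩) b by
    simpa using this (π a) hba (π a).isLt le_rfl
  intro k hk
  induction k, hk using Nat.le_induction with
  | base => simpa using fun _ _ => T.rel_refl b
  | succ k hbk ih =>
    exact fun _ hka =>
      T.rel_trans (h ⟨k, by omega⟩ hbk (Nat.lt_of_succ_le hka)) (ih (by omega) (by omega))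

theorem ofJoined_joined {T : OSP (d + 1)} (hT : linear π ≤ T) :
    ofJoined π (joined π T) = T := by
  refine ext fun a b => ?_
  simp only [ofJoined_rel, joined, mem_filter, mem_univ, true_and]
  refine ⟨fun h => ?_, fun hab j hbj hja => ?_⟩
  · rcases le_total (π a) (π b) with hab | hba
    · exact hT a b hab
    · exact T.rel_of_forall_rel_succ_castSucc hba h
  · refine T.rel_trans (T.rel_trans (hT _ a ?_) hab) (hT b _ ?_)
    · simpa [linear_rel, Fin.le_iff_val_le_val] using hja
    · simpa [linear_rel, Fin.le_iff_val_le_val] using hbj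

theorem ofJoinedEmb_bot (π : Equiv.Perm (Fin (d + 1))) : ofJoinedEmb π ⊥ = linear π :=
  ofJoined_empty π

theorem isMin_ofJoinedEmb_bot (π : Equiv.Perm (Fin (d + 1))) : IsMin (ofJoinedEmb π ⊥) :=
  ofJoinedEmb_bot π ▸ isMin_linear π

theorem Ici_ofJoinedEmb_bot_subset_range (π : Equiv.Perm (Fin (d + 1))) :
    Set.Ici (ofJoinedEmb π ⊥) ⊆ Set.range (ofJoinedEmb π) := fun T hT =>
  ⟨joined π T, ofJoined_joined (ofJoinedEmb_bot π ▸ hT)⟩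

end Bars

end OSP

open OSP

theorem chElem_eq_ofJoined (d : ℕ) (π : Equiv.Perm (Fin (d + 1))) (τ : Equiv.Perm (Fin d))
    (r : ℕ) : chElem d π τ r = ofJoined π (sublevel τ r) := by
  show ofRank (blk d π τ r) = ofRank _
  congr 1
  funext x
  simp [blk, barsBelow, sublevel]

theorem chSet_eq_image (d : ℕ) (π : Equiv.Perm (Fin (d + 1))) (τ : Equiv.Perm (Fin d)) :
    chSet d π τ = ofJoinedEmb π '' sublevelChain τ := by
  ext T
  simp [chSet, sublevelChain, chElem_eq_ofJoined, ofJoinedEmb, eq_comm]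

theorem isMaxChain_chSet (d : ℕ) (π : Equiv.Perm (Fin (d + 1))) (τ : Equiv.Perm (Fin d)) :
    IsMaxChain (· ≤ ·) (chSet d π τ) := by
  rw [chSet_eq_image]
  exact (isMaxChain_sublevelChain τ).image_orderEmbedding _ (isMin_ofJoinedEmb_bot π)
    (Ici_ofJoinedEmb_bot_subset_range π)

theorem linear_mem_chSet (d : ℕ) (π : Equiv.Perm (Fin (d + 1))) (τ : Equiv.Perm (Fin d)) :
    linear π ∈ chSet d π τ := by
  rw [chSet_eq_image, ← ofJoined_empty]
  exact ⟨∅, (isMaxChain_sublevelChain τ).bot_mem, rfl⟩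

theorem chSet_injective (d : ℕ) :
    Injective fun p : Equiv.Perm (Fin (d + 1)) × Equiv.Perm (Fin d) => chSet d p.1 p.2 := by
  rintro ⟨π, τ⟩ ⟨π', τ'⟩ h
  simp only at h
  obtain rfl : π = π' := by
    have hπ : linear π ∈ chSet d π' τ' := h ▸ linear_mem_chSet d π τ
    refine linear_injective ?_
    rcases (isMaxChain_chSet d π' τ').1.total hπ (linear_mem_chSet d π' τ') with hle | hle
    · exact le_antisymm hle (isMin_linear π' hle)
    · exact le_antisymm (isMin_linear π hle) hle
  rw [chSet_eq_image, chSet_eq_image, (ofJoinedEmb π).injective.image_injective.eq_iff] at h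
  rw [sublevelChain_injective h]

theorem exists_chSet_eq_of_isMaxChain (d : ℕ) {c : Set (OSP (d + 1))}
    (hc : IsMaxChain (· ≤ ·) c) : ∃ p : Equiv.Perm (Fin (d + 1)) × Equiv.Perm (Fin d),
      c = chSet d p.1 p.2 := by
  obtain ⟨π, hπ⟩ := exists_linear_mem_of_isMaxChain hc
  rw [← ofJoinedEmb_bot] at hπ
  obtain ⟨c', hc', rfl⟩ := hc.exists_image_orderEmbedding_eq (ofJoinedEmb π)
    (isMin_ofJoinedEmb_bot π) (Ici_ofJoinedEmb_bot_subset_range π) hπ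
  obtain ⟨τ, rfl⟩ := hc'.exists_eq_sublevelChain (Fintype.card_fin d)
  exact ⟨(π, τ), (chSet_eq_image d π τ).symm⟩

/-- Lemma `lem:diff` (first part): `(π,τ) ↦ ch(π,τ)` is a bijection from
`S_{d+1} × S_d` onto the set of maximal chains of the ordered set partition poset
`O_{d+1}`; in particular `O_{d+1}` has `(d+1)!·d!` maximal chains. -/
theorem chain_bijection (d : ℕ) :
    (∀ (π : Equiv.Perm (Fin (d+1))) (τ : Equiv.Perm (Fin d)),
      IsMaxChain (· ≤ ·) (chSet d π τ)) ∧
    Function.Injective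
      (fun p : Equiv.Perm (Fin (d+1)) × Equiv.Perm (Fin d) => chSet d p.1 p.2) ∧
    (∀ c : Set (OSP (d+1)), IsMaxChain (· ≤ ·) c →
      ∃ p : Equiv.Perm (Fin (d+1)) × Equiv.Perm (Fin d), c = chSet d p.1 p.2) ∧
    Nat.card {c : Set (OSP (d+1)) // IsMaxChain (· ≤ ·) c}
      = (d+1).factorial * d.factorial := by
  refine ⟨isMaxChain_chSet d, chSet_injective d, fun _ => exists_chSet_eq_of_isMaxChain d, ?_⟩
  have hbij : Bijective fun p : Equiv.Perm (Fin (d + 1)) × Equiv.Perm (Fin d) =>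
      (⟨chSet d p.1 p.2, isMaxChain_chSet d p.1 p.2⟩ :
        {c : Set (OSP (d + 1)) // IsMaxChain (· ≤ ·) c}) :=
    ⟨fun p q h => chSet_injective d (congrArg Subtype.val h), fun ⟨c, hc⟩ =>
      (exists_chSet_eq_of_isMaxChain d hc).imp fun _ hp => Subtype.ext hp.symm⟩
  rw [← Nat.card_eq_of_bijective _ hbij, Nat.card_prod, Nat.card_perm, Nat.card_perm]
  simp
end

section
/- Let T = S_1|S_2|...|S_{k+1} be an ordered set partition of [d+1] with structure type (t_0=0, t_1, ..., t_{k+1}=d+1) where t_i = |S_1| + ... + |S_i|. Suppose T lies on the maximal chain ch(π,τ), i.e., S_i = {π^{-1}(j) : t_{i-1}+1 ≤ j ≤ t_i} for all i and the labels on the remaining bars are {τ(t_1),...,τ(t_k)} = {d−k+1,...,d}. Then ⟨e_T, v_{π,τ}⟩ = M(∑_{i=1}^{k+1} i ∑_{j=t_{i-1}+1}^{t_i} α_j) + N ∑_{j=d−k+1}^{d} β_j, where v_{π,τ} is the nested permutohedron vertex with parameters (α,β;M,N). -/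
/-- The standard basis vector `e_j` of `ℝ^{d+1}`. -/
noncomputable def stdVec (d : ℕ) (j : Fin (d+1)) : Fin (d+1) → ℝ :=
  fun x => if x = j then 1 else 0

/-- The candidate vertex `v_{π,τ}` of the nested permutohedron `Perm(α,β;M,N)`. -/
noncomputable def nestedVertex (d : ℕ) (α : Fin (d+1) → ℝ) (β : Fin d → ℝ) (M N : ℝ)
    (π : Equiv.Perm (Fin (d+1))) (τ : Equiv.Perm (Fin d)) : Fin (d+1) → ℝ :=
  M • (∑ i, α i • stdVec d (π⁻¹ i)) +
    N • (∑ j : Fin d, β j •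
      (stdVec d (π⁻¹ (Fin.succ (τ⁻¹ j))) - stdVec d (π⁻¹ (Fin.castSucc (τ⁻¹ j)))))

/-- Extend a finite sequence to `ℕ` by `0`. -/
noncomputable def finExt {n : ℕ} (f : Fin n → ℝ) (p : ℕ) : ℝ :=
  if h : p < n then f ⟨p, h⟩ else 0

open Finset

/-!
Read through `π`, the vector `e_T` is the block-index function `c p = #{i ≤ k | t i ≤ p}`.
The `M`-part of `⟨e_T, v_{π,τ}⟩` is then `∑_p c p α_p`; Abel summation rewrites it as
`∑_{i ≤ k} ∑_{p ≥ t i} α_p`, and regrouping by blocks gives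
`∑_i (i + 1) ∑_{p ∈ [t i, t (i+1))} α_p`.
The `N`-part pairs `β_{τ b}` with the jump `c (b + 1) - c b`, which is `1` at the bars and `0`
elsewhere. The jumps telescope to `c d - c 0 ≥ (k + 1) - 1`, so there are at least `k` bars;
as their labels lie among the top `k` labels, they are exactly those.
-/

def blockIndex (t : ℕ → ℕ) (m p : ℕ) : ℕ := #{i ∈ range m | t i ≤ p}

lemma card_filter_apply_eq_of_injOn {s : Finset ℕ} {t : ℕ → ℕ} (ht : Set.InjOn t s) (q : ℕ) :
    #{i ∈ s | t i = q} = if q ∈ s.image t then 1 else 0 := by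
  rw [card_filter, ← sum_image (f := fun y => if y = q then 1 else 0) ht, sum_ite_eq']

lemma blockIndex_succ {t : ℕ → ℕ} {m : ℕ} (ht : Set.InjOn t (range m)) (p : ℕ) :
    blockIndex t m (p + 1) = blockIndex t m p + if p + 1 ∈ (range m).image t then 1 else 0 := by
  have hsplit : {i ∈ range m | t i ≤ p + 1} = {i ∈ range m | t i ≤ p ∨ t i = p + 1} := by
    simp only [Nat.le_add_one_iff]
  rw [blockIndex, blockIndex, hsplit, filter_or, card_union_of_disjoint,
    card_filter_apply_eq_of_injOn ht]
  exact disjoint_filter.2 fun i _ hle heq => by omega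

lemma blockIndex_succ_sub {t : ℕ → ℕ} {m : ℕ} (ht : Set.InjOn t (range m)) (p : ℕ) :
    (blockIndex t m (p + 1) : ℝ) - blockIndex t m p
      = if p + 1 ∈ (range m).image t then 1 else 0 := by
  rw [blockIndex_succ ht]
  split_ifs <;> simp

lemma blockIndex_of_lt {t : ℕ → ℕ} {m p : ℕ} (h : ∀ i < m, t i ≤ p) : blockIndex t m p = m := by
  rw [blockIndex, filter_true_of_mem fun i hi => h i (mem_range.1 hi), card_range]

lemma blockIndex_zero_le_one {t : ℕ → ℕ} {m : ℕ} (ht : StrictMonoOn t (Set.Iio m)) :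
    blockIndex t m 0 ≤ 1 := by
  refine (card_le_card fun i hi => ?_).trans (card_singleton 0).le
  simp only [mem_filter, mem_range, nonpos_iff_eq_zero] at hi
  rw [mem_singleton]
  by_contra h0
  have := ht (Set.mem_Iio.2 (by omega : 0 < m)) (Set.mem_Iio.2 hi.1) (Nat.pos_of_ne_zero h0)
  omega

lemma sum_blockIndex_mul {R : Type*} [CommSemiring R] (t : ℕ → ℕ) (m n : ℕ) (f : ℕ → R) :
    ∑ p ∈ range n, (blockIndex t m p : R) * f p = ∑ i ∈ range m, ∑ p ∈ Ico (t i) n, f p := by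
  have hIco (i : ℕ) : {p ∈ range n | t i ≤ p} = Ico (t i) n := by
    ext p; simp [and_comm]
  simp_rw [blockIndex, card_filter, Nat.cast_sum, sum_mul, Nat.cast_ite, ite_mul, Nat.cast_one,
    one_mul, Nat.cast_zero, zero_mul]
  rw [sum_comm]
  simp_rw [← sum_filter, hIco]

lemma sum_sum_Ico_eq_sum_mul {R : Type*} [CommSemiring R] {t : ℕ → ℕ} {m : ℕ}
    (ht : MonotoneOn t (Set.Iic m)) (g : ℕ → R) :
    ∑ i ∈ range m, ∑ p ∈ Ico (t i) (t m), g p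
      = ∑ i ∈ range m, ((i : R) + 1) * ∑ p ∈ Ico (t i) (t (i + 1)), g p := by
  induction m with
  | zero => simp
  | succ m ih =>
    have htm : t m ≤ t (m + 1) := ht (by simp) (by simp) m.le_succ
    have hsplit : ∀ i ∈ range (m + 1), ∑ p ∈ Ico (t i) (t (m + 1)), g p
        = ∑ p ∈ Ico (t i) (t m), g p + ∑ p ∈ Ico (t m) (t (m + 1)), g p := fun i hi =>
      (sum_Ico_consecutive g (ht (by simp at hi ⊢; omega) (by simp) (by simp at hi; omega))
        htm).symm
    rw [sum_congr rfl hsplit, sum_add_distrib,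
      sum_range_succ (fun i => ∑ p ∈ Ico (t i) (t m), g p), Ico_self, sum_empty, add_zero,
      ih (ht.mono (Set.Iic_subset_Iic.2 m.le_succ)), sum_const, card_range,
      nsmul_eq_mul, sum_range_succ _ m]
    push_cast
    ring

lemma finExt_val {n : ℕ} (f : Fin n → ℝ) (i : Fin n) : finExt f i = f i := by
  simp [finExt]

lemma sum_finExt_Ico {n : ℕ} (f : Fin n → ℝ) (a : ℕ) :
    ∑ p ∈ Ico a n, finExt f p = ∑ i ∈ (Ico a n).attachFin (fun _ hp => (mem_Ico.1 hp).2), f i := by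
  conv_lhs => rw [← image_val_attachFin (fun _ hp => (mem_Ico.1 hp).2)]
  rw [sum_image fun _ _ _ _ => Fin.ext]
  simp_rw [finExt_val]

lemma sum_mul_stdVec {d : ℕ} (w : Fin (d + 1) → ℝ) (j : Fin (d + 1)) :
    ∑ x, w x * stdVec d j x = w j := by
  simp [stdVec]

lemma sum_comp_mul_nestedVertex {d : ℕ} (u : Fin (d + 1) → ℝ) (α : Fin (d+1) → ℝ)
    (β : Fin d → ℝ) (M N : ℝ) (π : Equiv.Perm (Fin (d+1))) (τ : Equiv.Perm (Fin d)) :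
    ∑ x, u (π x) * nestedVertex d α β M N π τ x
      = M * ∑ i, α i * u i + N * ∑ j, β j * (u (τ⁻¹ j).succ - u (τ⁻¹ j).castSucc) := by
  simp only [nestedVertex, Pi.add_apply, Pi.smul_apply, Finset.sum_apply, Pi.sub_apply,
    smul_eq_mul, mul_add, sum_add_distrib, mul_sum, mul_sub, sum_sub_distrib]
  simp only [mul_left_comm (u _), sum_comm (γ := Fin (d+1)), ← mul_sum, sum_mul_stdVec,
    Equiv.Perm.coe_inv, Equiv.apply_symm_apply]

-- The bar at cut point `t i` separates positions `t i - 1` and `t i`; it is indexed by `t i - 1`.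
def bars (t : ℕ → ℕ) (k d : ℕ) : Finset (Fin d) := {b | (b : ℕ) + 1 ∈ (range (k + 1)).image t}

lemma le_card_bars {d k : ℕ} {t : ℕ → ℕ} (hst : StrictMonoOn t (Set.Iic (k + 1)))
    (htlast : t (k + 1) = d + 1) :
    k ≤ #(bars t k d) := by
  have hinj : Set.InjOn t (range (k + 1)) :=
    hst.injOn.mono fun i hi => Set.mem_Iic.2 (mem_range.1 hi).le
  have htop : blockIndex t (k + 1) d = k + 1 := blockIndex_of_lt fun i hi => by
    have := hst (Set.mem_Iic.2 hi.le) Set.self_mem_Iic hi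
    omega
  have hbot : blockIndex t (k + 1) 0 ≤ 1 :=
    blockIndex_zero_le_one (hst.mono fun i hi => Set.mem_Iic.2 (Set.mem_Iio.1 hi).le)
  have hcard : (#(bars t k d) : ℝ)
      = blockIndex t (k + 1) d - blockIndex t (k + 1) 0 := by
    rw [← sum_range_sub (fun p => (blockIndex t (k + 1) p : ℝ)),
      ← Fin.sum_univ_eq_sum_range
        (fun p => (blockIndex t (k + 1) (p + 1) : ℝ) - blockIndex t (k + 1) p), bars, ← sum_boole]
    simp_rw [blockIndex_succ_sub hinj]
  have hbot' : (blockIndex t (k + 1) 0 : ℝ) ≤ 1 := by exact_mod_cast hbot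
  have : (k : ℝ) ≤ #(bars t k d) := by
    rw [hcard, htop]
    push_cast
    linarith
  exact_mod_cast this

lemma bars_map_eq_attachFin_Ico {d k : ℕ} (hk : k ≤ d) (τ : Equiv.Perm (Fin d)) {t : ℕ → ℕ}
    (ht0 : t 0 = 0) (htlast : t (k + 1) = d + 1) (hst : StrictMonoOn t (Set.Iic (k + 1)))
    (hlabel : ∀ b : Fin d, (∃ i, 1 ≤ i ∧ i ≤ k ∧ t i = (b : ℕ) + 1) → d - k ≤ (τ b : ℕ)) :
    (bars t k d).map τ.toEmbedding
      = (Ico (d - k) d).attachFin (fun _ hp => (mem_Ico.1 hp).2) := by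
  refine eq_of_subset_of_card_le (fun j hj => ?_) ?_
  · obtain ⟨b, hb, rfl⟩ := mem_map.1 hj
    obtain ⟨i, hi, hib⟩ := mem_image.1 (mem_filter.1 hb).2
    have hi0 : i ≠ 0 := by rintro rfl; omega
    rw [mem_attachFin, mem_Ico]
    exact ⟨hlabel b ⟨i, by omega, by simpa [Nat.lt_succ_iff] using hi, hib⟩, (τ b).isLt⟩
  · rw [card_attachFin, Nat.card_Ico, Nat.sub_sub_self hk, card_map]
    exact le_card_bars hst htlast

lemma sum_mul_blockIndex_succ_sub {d k : ℕ} (hk : k ≤ d) (β : Fin d → ℝ)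
    (τ : Equiv.Perm (Fin d)) {t : ℕ → ℕ} (ht0 : t 0 = 0) (htlast : t (k + 1) = d + 1)
    (hst : StrictMonoOn t (Set.Iic (k + 1)))
    (hlabel : ∀ b : Fin d, (∃ i, 1 ≤ i ∧ i ≤ k ∧ t i = (b : ℕ) + 1) → d - k ≤ (τ b : ℕ)) :
    ∑ j, β j * ((blockIndex t (k + 1) (τ⁻¹ j + 1) : ℝ) - blockIndex t (k + 1) (τ⁻¹ j))
      = ∑ p ∈ Ico (d - k) d, finExt β p := by
  have hinj : Set.InjOn t (range (k + 1)) :=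
    hst.injOn.mono fun i hi => Set.mem_Iic.2 (mem_range.1 hi).le
  rw [sum_finExt_Ico, ← bars_map_eq_attachFin_Ico hk τ ht0 htlast hst hlabel, sum_map, bars,
    sum_filter, ← Equiv.sum_comp τ]
  simp_rw [Equiv.Perm.coe_inv, Equiv.symm_apply_apply, blockIndex_succ_sub hinj, mul_ite, mul_one,
    mul_zero]
  rfl

theorem eT_inner_nestedVertex_general (d k : ℕ) (hk : k ≤ d)
    (α : Fin (d+1) → ℝ) (β : Fin d → ℝ) (M N : ℝ)
    (π : Equiv.Perm (Fin (d+1))) (τ : Equiv.Perm (Fin d))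
    (t : ℕ → ℕ) (ht0 : t 0 = 0) (htlast : t (k+1) = d+1)
    (htmono : ∀ i j, i < j → j ≤ k + 1 → t i < t j)
    (hlabel : ∀ b : Fin d, (∃ i, 1 ≤ i ∧ i ≤ k ∧ t i = (b : ℕ) + 1) →
      d - k ≤ (τ b : ℕ)) :
    (∑ x : Fin (d+1),
        ((((Finset.range (k+1)).filter fun i => t i ≤ (π x : ℕ)).card : ℝ)
          * nestedVertex d α β M N π τ x))
      = M * (∑ i ∈ Finset.range (k+1),
            ((i : ℝ) + 1) * ∑ p ∈ Finset.Ico (t i) (t (i+1)), finExt α p)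
        + N * ∑ j ∈ Finset.Ico (d - k) d, finExt β j := by
  have hst : StrictMonoOn t (Set.Iic (k + 1)) := fun i _ j hj hij => htmono i j hij hj
  have hαpart : ∑ i, α i * (blockIndex t (k + 1) i : ℝ)
      = ∑ i ∈ range (k + 1), ((i : ℝ) + 1) * ∑ p ∈ Ico (t i) (t (i + 1)), finExt α p := by
    simp_rw [mul_comm (α _), ← finExt_val α]
    rw [Fin.sum_univ_eq_sum_range (fun p => (blockIndex t (k + 1) p : ℝ) * finExt α p),
      sum_blockIndex_mul, ← sum_sum_Ico_eq_sum_mul hst.monotoneOn, htlast]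
  refine (sum_comp_mul_nestedVertex (fun p => (blockIndex t (k + 1) p : ℝ)) α β M N π τ).trans ?_
  simp only [Fin.val_succ, Fin.val_castSucc]
  rw [hαpart, sum_mul_blockIndex_succ_sub hk β τ ht0 htlast hst hlabel]

/-- Theorem `thm:facetdes` (key computation): if `T = S₁|⋯|S_{k+1}` has (0-indexed) structure
type `(t₀=0, t₁, …, t_{k+1}=d+1)`, its blocks are the segments
`Sᵢ = {π⁻¹(p) : t_{i-1} ≤ p < t_i}` of `π` (so `e_T(x) = #{i ≤ k : t i ≤ π(x)}`, the 1-based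
block index of `x`), and the bars of `T` carry the top `k` labels under `τ`, then
`⟨e_T, v_{π,τ}⟩ = M ∑_{i=1}^{k+1} i ∑_{j=t_{i-1}+1}^{t_i} α_j + N ∑_{j=d-k+1}^{d} β_j`. -/
theorem eT_inner_nestedVertex (d k : ℕ) (hk : k ≤ d)
    (α : Fin (d+1) → ℝ) (β : Fin d → ℝ) (M N : ℝ)
    (hα : StrictMono α) (hβ : StrictMono β) (hM : 0 < M) (hN : 0 < N)
    (π : Equiv.Perm (Fin (d+1))) (τ : Equiv.Perm (Fin d))
    (t : ℕ → ℕ) (ht0 : t 0 = 0) (htlast : t (k+1) = d+1)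
    (htmono : ∀ i j, i < j → j ≤ k + 1 → t i < t j)
    (hlabel : ∀ b : Fin d, (∃ i, 1 ≤ i ∧ i ≤ k ∧ t i = (b : ℕ) + 1) →
      d - k ≤ (τ b : ℕ)) :
    (∑ x : Fin (d+1),
        ((((Finset.range (k+1)).filter fun i => t i ≤ (π x : ℕ)).card : ℝ)
          * nestedVertex d α β M N π τ x))
      = M * (∑ i ∈ Finset.range (k+1),
            ((i : ℝ) + 1) * ∑ p ∈ Finset.Ico (t i) (t (i+1)), finExt α p)
        + N * ∑ j ∈ Finset.Ico (d - k) d, finExt β j :=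
  eT_inner_nestedVertex_general d k hk α β M N π τ t ht0 htlast htmono hlabel
end

section
/- Fix π ∈ S_{d+1} and consider the vector w = e_{T(π,τ;r)} ∈ ℝ^{d+1} associated to the rank-r element of the chain ch(π,τ). Then, with u_i = w_{π^{-1}(i)} and (Δu)_i = u_{i+1} − u_i, this vector is the unique solution in W_d = ℝ^{d+1}/ℝ·1 of the system: (Δu)_{τ^{-1}(1)} = ... = (Δu)_{τ^{-1}(r)} = 0 and (Δu)_{τ^{-1}(r+1)} = ... = (Δu)_{τ^{-1}(d)} = 1. In particular, the cone σ(π,τ) = {x : 0 ≤ (Δx)^π_{τ^{-1}(1)} ≤ ... ≤ (Δx)^π_{τ^{-1}(d)}} is simplicial, spanned by the d rays e_{T(π,τ;r)}, 0 ≤ r ≤ d−1. -/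
open Finset

/-- The paper's `(Δx)^π_b`. -/
def permDiff {n : ℕ} {M : Type*} [AddCommGroup M] (π : Equiv.Perm (Fin (n+1)))
    (x : Fin (n+1) → M) (b : Fin n) : M :=
  x (π⁻¹ b.succ) - x (π⁻¹ b.castSucc)

section permDiff

variable {n : ℕ} {M : Type*} [AddCommGroup M] (π : Equiv.Perm (Fin (n+1)))

theorem permDiff_eq_iff_exists_add_const (w v : Fin (n+1) → M) :
    permDiff π w = permDiff π v ↔ ∃ c : M, w = fun x => v x + c := by
  constructor
  · intro h
    refine ⟨w (π⁻¹ 0) - v (π⁻¹ 0), ?_⟩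
    have along_π : ∀ i, w (π⁻¹ i) = v (π⁻¹ i) + (w (π⁻¹ 0) - v (π⁻¹ 0)) := by
      intro i
      induction i using Fin.induction with
      | zero => abel
      | succ b ih =>
        have hb := congrFun h b
        simp only [permDiff, sub_eq_iff_eq_add] at hb
        rw [hb, ih]; abel
    funext x
    simpa using along_π (π x)
  · rintro ⟨c, rfl⟩
    funext b
    simp only [permDiff]; abel

theorem permDiff_sum_mul {ι : Type*} [Fintype ι] (c : ι → ℝ) (f : ι → Fin (n+1) → ℝ)
    (b : Fin n) :
    permDiff π (fun y => ∑ s, c s * f s y) b = ∑ s, c s * permDiff π (f s) b := by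
  simp only [permDiff, mul_sub, sum_sub_distrib]

end permDiff

theorem eTvec_permDiff (d : ℕ) (π : Equiv.Perm (Fin (d+1))) (τ : Equiv.Perm (Fin d))
    (s : ℕ) (b : Fin d) :
    permDiff π (eTvec d π τ s) b = if s ≤ (τ b : ℕ) then 1 else 0 := by
  simp only [permDiff, eTvec, Equiv.Perm.coe_inv, Equiv.apply_symm_apply, card_filter]
  push_cast
  rw [add_sub_add_left_eq_sub, ← sum_sub_distrib, sum_eq_single b]
  · by_cases h : s ≤ (τ b : ℕ) <;> simp [h]
  · intro j _ hj
    have lt_succ_iff_lt : (j : ℕ) < b.succ ↔ (j : ℕ) < b.castSucc := by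
      have := Fin.val_ne_of_ne hj
      rw [Fin.val_succ, Fin.val_castSucc]; omega
    simp only [lt_succ_iff_lt, sub_self]
  · simp

theorem nonneg_monotone_iff_exists_cumsum {n : ℕ} (g : Fin n → ℝ) :
    ((∀ k, 0 ≤ g k) ∧ Monotone g) ↔
      ∃ c : Fin n → ℝ, (∀ s, 0 ≤ c s) ∧ ∀ k, g k = ∑ s, if s ≤ k then c s else 0 := by
  constructor
  · rintro ⟨hg0, hg⟩
    -- `G i = g (i - 1)` with `G 0 = 0`, so that `g` is the telescoping sum of `G (i + 1) - G i`
    set G : ℕ → ℝ := fun i => if h : 0 < i ∧ i ≤ n then g ⟨i - 1, by omega⟩ else 0 with hG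
    have G_succ (k : Fin n) : G (k + 1) = g k := by simp [hG]
    refine ⟨fun s => G (s + 1) - G s, fun s => ?_, fun k => ?_⟩
    · change 0 ≤ G (s + 1) - G s
      rw [G_succ, sub_nonneg]
      by_cases hs : (s : ℕ) = 0
      · simpa [hG, hs] using hg0 s
      · have prev_le : (⟨s - 1, by omega⟩ : Fin n) ≤ s := by simp [Fin.le_def]
        simpa [hG, hs, s.is_le', Nat.pos_of_ne_zero hs] using hg prev_le
    · change g k = ∑ s : Fin n, if (s : ℕ) ≤ k then G (s + 1) - G s else 0
      rw [Fin.sum_univ_eq_sum_range (fun i => if i ≤ (k : ℕ) then G (i + 1) - G i else 0),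
        ← sum_filter, show (range n).filter (· ≤ (k : ℕ)) = range (k + 1) by ext; simp; omega,
        sum_range_sub, G_succ]
      simp [hG]
  · rintro ⟨c, hc, hg⟩
    obtain rfl : g = _ := funext hg
    refine ⟨fun k => sum_nonneg fun s _ => ?_, fun k k' hkk' => sum_le_sum fun s _ => ?_⟩
    · split_ifs <;> simp [hc s]
    · by_cases h : s ≤ k
      · simp [h, h.trans hkk']
      · split_ifs <;> simp [hc s]

theorem permDiff_sum_mul_eTvec (d : ℕ) (π : Equiv.Perm (Fin (d+1))) (τ : Equiv.Perm (Fin d))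
    (c : Fin d → ℝ) (b : Fin d) :
    permDiff π (fun y => ∑ s : Fin d, c s * eTvec d π τ s y) b =
      ∑ s, if s ≤ τ b then c s else 0 := by
  simp only [permDiff_sum_mul, eTvec_permDiff, mul_ite, mul_one, mul_zero, Fin.le_def]

theorem eTvec_solves_system_general (d : ℕ) (π : Equiv.Perm (Fin (d+1)))
    (τ : Equiv.Perm (Fin d)) (r : ℕ) :
    (∀ b : Fin d,
      eTvec d π τ r (π⁻¹ (Fin.succ b)) - eTvec d π τ r (π⁻¹ (Fin.castSucc b))
        = if (τ b : ℕ) < r then 0 else 1) ∧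
    (∀ w : Fin (d+1) → ℝ,
      (∀ b : Fin d,
        w (π⁻¹ (Fin.succ b)) - w (π⁻¹ (Fin.castSucc b))
          = if (τ b : ℕ) < r then 0 else 1) →
      ∃ c : ℝ, w = fun x => eTvec d π τ r x + c) ∧
    (∀ x : Fin (d+1) → ℝ,
      ((∀ j : Fin d, 0 ≤ x (π⁻¹ (Fin.succ j)) - x (π⁻¹ (Fin.castSucc j))) ∧
        (∀ j j' : Fin d, (τ j : ℕ) ≤ (τ j' : ℕ) →
          x (π⁻¹ (Fin.succ j)) - x (π⁻¹ (Fin.castSucc j))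
            ≤ x (π⁻¹ (Fin.succ j')) - x (π⁻¹ (Fin.castSucc j'))))
      ↔ ∃ (c : Fin d → ℝ) (c₀ : ℝ), (∀ s, 0 ≤ c s) ∧
          x = fun y => (∑ s : Fin d, c s * eTvec d π τ (s : ℕ) y) + c₀) := by
  have system_iff (w : Fin (d+1) → ℝ) :
      (∀ b : Fin d, w (π⁻¹ b.succ) - w (π⁻¹ b.castSucc) = if (τ b : ℕ) < r then 0 else 1) ↔
        permDiff π w = permDiff π (eTvec d π τ r) := by
    simp only [funext_iff, eTvec_permDiff, ← not_le, ite_not]; rfl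
  refine ⟨(system_iff _).2 rfl,
    fun w hw => (permDiff_eq_iff_exists_add_const π w _).1 ((system_iff w).1 hw), fun x => ?_⟩
  have cone_iff : ((∀ j, 0 ≤ permDiff π x j) ∧
      ∀ j j' : Fin d, τ j ≤ τ j' → permDiff π x j ≤ permDiff π x j') ↔
        (∀ k, 0 ≤ permDiff π x (τ⁻¹ k)) ∧ Monotone fun k => permDiff π x (τ⁻¹ k) := by
    refine and_congr τ.forall_congr_left (Equiv.forall₂_congr τ τ ?_)
    simp
  refine (cone_iff.trans (nonneg_monotone_iff_exists_cumsum _)).trans (exists_congr fun c => ?_)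
  rw [exists_and_left,
    ← permDiff_eq_iff_exists_add_const π x fun y => ∑ s : Fin d, c s * eTvec d π τ s y]
  simp only [funext_iff, permDiff_sum_mul_eTvec]
  exact and_congr_right fun _ => τ.symm.forall_congr fun k => by simp

/-- Proof of Proposition `prop:charbr2`: the vector `w = e_{T(π,τ;r)}` is, uniquely up to
adding a multiple of the all-ones vector, the solution of the system
`(Δw)^π_{τ⁻¹(j)} = 0` for labels `j < r` and `= 1` for labels `j ≥ r`; consequently the cone
`σ(π,τ) = {x : 0 ≤ (Δx)^π_{τ⁻¹(1)} ≤ ⋯ ≤ (Δx)^π_{τ⁻¹(d)}}` is simplicial, spanned (modulo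
the all-ones line) by the rays `e_{T(π,τ;r)}`, `0 ≤ r ≤ d−1`. Here
`(Δx)^π_b = x(π⁻¹(b+1)) − x(π⁻¹(b))`. -/
theorem eTvec_solves_system (d : ℕ) (π : Equiv.Perm (Fin (d+1)))
    (τ : Equiv.Perm (Fin d)) (r : ℕ) (hr : r ≤ d) :
    (∀ b : Fin d,
      eTvec d π τ r (π⁻¹ (Fin.succ b)) - eTvec d π τ r (π⁻¹ (Fin.castSucc b))
        = if (τ b : ℕ) < r then 0 else 1) ∧
    (∀ w : Fin (d+1) → ℝ,
      (∀ b : Fin d,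
        w (π⁻¹ (Fin.succ b)) - w (π⁻¹ (Fin.castSucc b))
          = if (τ b : ℕ) < r then 0 else 1) →
      ∃ c : ℝ, w = fun x => eTvec d π τ r x + c) ∧
    (∀ x : Fin (d+1) → ℝ,
      ((∀ j : Fin d, 0 ≤ x (π⁻¹ (Fin.succ j)) - x (π⁻¹ (Fin.castSucc j))) ∧
        (∀ j j' : Fin d, (τ j : ℕ) ≤ (τ j' : ℕ) →
          x (π⁻¹ (Fin.succ j)) - x (π⁻¹ (Fin.castSucc j))
            ≤ x (π⁻¹ (Fin.succ j')) - x (π⁻¹ (Fin.castSucc j'))))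
      ↔ ∃ (c : Fin d → ℝ) (c₀ : ℝ), (∀ s, 0 ≤ c s) ∧
          x = fun y => (∑ s : Fin d, c s * eTvec d π τ (s : ℕ) y) + c₀) :=
  eTvec_solves_system_general d π τ r
end

section
/- Let 0 < ε_1 < 1/2 and ε_i < ε_{i-1}/2 for 2 ≤ i ≤ d. Then the sequence α = (ε_d, ε_{d-1} − ε_d, ε_{d-2} − ε_{d-1}, ..., ε_1 − ε_2, 1 − ε_1) is strictly increasing, and the set function b(S) = 1 − ε_{|S|} for ∅ ≠ S ⊊ [d+1] (with b(∅) = 0, b([d+1]) = 1) is submodular; moreover the polytope {x : ⟨1,x⟩ = 1, ⟨e_S, x⟩ ≤ 1 − ε_{|S|} ∀ ∅ ≠ S ⊊ [d+1]} is the permutohedron Perm(α). -/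
/-- The extended chiseling sequence: `ε̂(0) = 1`, `ε̂(j) = ε_j` for `1 ≤ j ≤ d`, and
`ε̂(j) = 0` for `j > d`. -/
noncomputable def epsExt (d : ℕ) (ε : ℕ → ℝ) (j : ℕ) : ℝ :=
  if j = 0 then 1 else if j ≤ d then ε j else 0

/-- The set function `b(S) = 1 − ε_{|S|}` for proper nonempty `S`, with `b(∅) = 0`,
`b([d+1]) = 1`. -/
noncomputable def chiselFn (d : ℕ) (ε : ℕ → ℝ) (S : Finset (Fin (d+1))) : ℝ :=
  if S = ∅ then 0 else if S = Finset.univ then 1 else 1 - ε S.card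

lemma cs_telescope (f : ℕ → ℝ) (a m : ℕ) :
    f (a + m) - f a = ∑ t ∈ Finset.range m, (f (a + t + 1) - f (a + t)) := by
  induction m with
  | zero => simp
  | succ m ih =>
      rw [Finset.sum_range_succ, ← ih]
      have : a + (m + 1) = a + m + 1 := rfl
      rw [this]; ring

lemma sum_delta_le (δ : ℕ → ℝ) (n : ℕ)
    (hδle : ∀ j k : ℕ, j ≤ k → k < n → δ k ≤ δ j) :
    ∀ (m : ℕ) (J : Finset ℕ), (∑ j ∈ J, j) = m → J ⊆ Finset.range n →
      (∑ j ∈ J, δ j) ≤ ∑ j ∈ Finset.range J.card, δ j := by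
  intro m
  induction m using Nat.strong_induction_on with
  | _ m ih =>
    intro J hJm hJn
    by_cases hJ : J ⊆ Finset.range J.card
    · have hJeq : J = Finset.range J.card :=
        Finset.eq_of_subset_of_card_le hJ (by rw [Finset.card_range])
      calc (∑ j ∈ J, δ j) = ∑ j ∈ Finset.range J.card, δ j := by rw [← hJeq]
        _ ≤ _ := le_refl _
    · obtain ⟨j, hjJ, hjk⟩ := Finset.not_subset.mp hJ
      rw [Finset.mem_range, not_lt] at hjk
      have hkn : J.card ≤ n := by
        have := Finset.card_le_card hJn
        simpa [Finset.card_range] using this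
      have hex : ∃ j' ∈ Finset.range J.card, j' ∉ J := by
        by_contra hcon
        push_neg at hcon
        have hsub : insert j (Finset.range J.card) ⊆ J := by
          intro a ha
          rcases Finset.mem_insert.mp ha with rfl | ha
          · exact hjJ
          · exact hcon a ha
        have := Finset.card_le_card hsub
        rw [Finset.card_insert_of_notMem (by rw [Finset.mem_range]; omega),
          Finset.card_range] at this
        omega
      obtain ⟨j', hj'k, hj'J⟩ := hex
      rw [Finset.mem_range] at hj'k
      have hj'e : j' ∉ J.erase j := fun h => hj'J (Finset.mem_of_mem_erase h)
      have hcard1 : 1 ≤ J.card := Finset.card_pos.mpr ⟨j, hjJ⟩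
      set J' := insert j' (J.erase j) with hJ'
      have hJ'card : J'.card = J.card := by
        rw [hJ', Finset.card_insert_of_notMem hj'e, Finset.card_erase_of_mem hjJ]
        omega
      have hmeas : (∑ a ∈ J', a) < m := by
        have h1 : (∑ a ∈ J', a) = j' + ∑ a ∈ J.erase j, a := Finset.sum_insert hj'e
        have h2 : (∑ a ∈ J.erase j, a) + j = ∑ a ∈ J, a :=
          Finset.sum_erase_add _ _ hjJ
        omega
      have hJ'n : J' ⊆ Finset.range n := by
        intro a ha
        rcases Finset.mem_insert.mp ha with rfl | ha
        · rw [Finset.mem_range]; omega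
        · exact hJn (Finset.mem_of_mem_erase ha)
      have hstep : (∑ a ∈ J, δ a) ≤ ∑ a ∈ J', δ a := by
        have h1 : (∑ a ∈ J', δ a) = δ j' + ∑ a ∈ J.erase j, δ a := Finset.sum_insert hj'e
        have h2 : (∑ a ∈ J.erase j, δ a) + δ j = ∑ a ∈ J, δ a :=
          Finset.sum_erase_add _ _ hjJ
        have h3 : δ j ≤ δ j' := hδle j' j (by omega) (by
          have := hJn hjJ; rw [Finset.mem_range] at this; exact this)
        linarith
      calc (∑ a ∈ J, δ a) ≤ ∑ a ∈ J', δ a := hstep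
        _ ≤ ∑ a ∈ Finset.range J'.card, δ a := ih _ hmeas J' rfl hJ'n
        _ = ∑ a ∈ Finset.range J.card, δ a := by rw [hJ'card]

lemma sum_alpha_le {n : ℕ} {f : ℕ → ℝ} {α : Fin n → ℝ}
    (hf0 : f 0 = 0)
    (hα : ∀ p : Fin n, α p = f (n - (p : ℕ)) - f (n - 1 - (p : ℕ)))
    (hδle : ∀ j k : ℕ, j ≤ k → k < n → f (k+1) - f k ≤ f (j+1) - f j)
    (A : Finset (Fin n)) : (∑ p ∈ A, α p) ≤ f A.card := by
  classical
  set δ : ℕ → ℝ := fun j => f (j+1) - f j with hδ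
  set J : Finset ℕ := Finset.image (fun p : Fin n => n - 1 - (p : ℕ)) A with hJ
  have hinj : ∀ p ∈ A, ∀ q ∈ A, n - 1 - (p:ℕ) = n - 1 - (q:ℕ) → p = q := by
    intro p _ q _ h
    have hp := p.isLt
    have hq := q.isLt
    exact Fin.ext (by omega)
  have h1 : (∑ p ∈ A, α p) = ∑ j ∈ J, δ j := by
    rw [hJ, Finset.sum_image hinj]
    apply Finset.sum_congr rfl
    intro p _
    rw [hα p, hδ]
    have hp := p.isLt
    have : n - (p:ℕ) = (n - 1 - (p:ℕ)) + 1 := by omega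
    rw [this]
  have hJn : J ⊆ Finset.range n := by
    intro a ha
    rw [hJ, Finset.mem_image] at ha
    obtain ⟨p, _, rfl⟩ := ha
    have := p.isLt
    rw [Finset.mem_range]
    omega
  have hJcard : J.card = A.card := Finset.card_image_of_injOn hinj
  have h2 : (∑ j ∈ J, δ j) ≤ ∑ j ∈ Finset.range J.card, δ j :=
    sum_delta_le δ n hδle _ J rfl hJn
  have h3 : (∑ j ∈ Finset.range A.card, δ j) = f A.card := by
    have := cs_telescope f 0 A.card
    simp only [zero_add, hf0, sub_zero] at this
    rw [hδ, ← this]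
  rw [h1, ← h3, ← hJcard]
  exact h2


lemma sum_alpha_univ {n : ℕ} {f : ℕ → ℝ} {α : Fin n → ℝ}
    (hf0 : f 0 = 0)
    (hα : ∀ p : Fin n, α p = f (n - (p : ℕ)) - f (n - 1 - (p : ℕ))) :
    (∑ p, α p) = f n := by
  have h0 : (∑ p : Fin n, α p)
      = ∑ p : Fin n, (fun j : ℕ => f (n - j) - f (n - 1 - j)) ((p : ℕ)) :=
    Finset.sum_congr rfl (fun p _ => hα p)
  rw [h0]
  rw [show (∑ p : Fin n, (fun j : ℕ => f (n - j) - f (n - 1 - j)) ((p : ℕ)))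
      = ∑ j ∈ Finset.range n, (f (n - j) - f (n - 1 - j)) from
    Fin.sum_univ_eq_sum_range (fun j : ℕ => f (n - j) - f (n - 1 - j)) n]
  have h2 : ∀ j ∈ Finset.range n,
      f (n - j) - f (n - 1 - j) = (fun j => f (j+1) - f j) (n - 1 - j) := by
    intro j hj
    rw [Finset.mem_range] at hj
    simp only
    have : n - j = (n - 1 - j) + 1 := by omega
    rw [this]
  rw [Finset.sum_congr rfl h2,
    Finset.sum_range_reflect (fun j : ℕ => f (j + 1) - f j) n]
  have h3 := cs_telescope f 0 n
  simp only [zero_add, hf0, sub_zero] at h3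
  rw [← h3]

lemma conc_of_delta {n : ℕ} {f : ℕ → ℝ}
    (hδ : ∀ j k : ℕ, j < k → k < n → f (k+1) - f k < f (j+1) - f j)
    {a b c e : ℕ} (hab : a ≤ b) (hbc : b ≤ c) (hce : c ≤ e) (hen : e ≤ n)
    (hsum : a + e = b + c) (hlt : a < b) : f a + f e < f b + f c := by
  have hm : b - a = e - c := by omega
  have hb' : b = a + (b - a) := by omega
  have he' : e = c + (b - a) := by omega
  have h1 : f b - f a = ∑ t ∈ Finset.range (b - a), (f (a + t + 1) - f (a + t)) := by
    nth_rewrite 1 [hb']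
    exact cs_telescope f a (b - a)
  have h2 : f e - f c = ∑ t ∈ Finset.range (b - a), (f (c + t + 1) - f (c + t)) := by
    nth_rewrite 1 [he']
    exact cs_telescope f c (b - a)
  have h3 : (∑ t ∈ Finset.range (b - a), (f (c + t + 1) - f (c + t)))
      < ∑ t ∈ Finset.range (b - a), (f (a + t + 1) - f (a + t)) := by
    apply Finset.sum_lt_sum_of_nonempty
    · rw [Finset.nonempty_range_iff]; omega
    · intro t ht
      rw [Finset.mem_range] at ht
      exact hδ (a + t) (c + t) (by omega) (by omega)
  linarith

/-- Polytope -/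
def Pol (n : ℕ) (f : ℕ → ℝ) : Set (Fin n → ℝ) :=
  {x | (∑ i, x i) = f n ∧ ∀ S : Finset (Fin n), S ≠ ∅ → S ≠ Finset.univ →
      (∑ i ∈ S, x i) ≤ f S.card}

open Classical in
noncomputable def TightF (n : ℕ) (f : ℕ → ℝ) (x : Fin n → ℝ) : Finset (Finset (Fin n)) :=
  Finset.univ.filter (fun S => S ≠ ∅ ∧ S ≠ Finset.univ ∧ (∑ i ∈ S, x i) = f S.card)

open Classical in
lemma mem_TightF {n : ℕ} {f : ℕ → ℝ} {x : Fin n → ℝ} {S : Finset (Fin n)} :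
    S ∈ TightF n f x ↔ S ≠ ∅ ∧ S ≠ Finset.univ ∧ (∑ i ∈ S, x i) = f S.card := by
  simp [TightF]

lemma Pol.bound {n : ℕ} {f : ℕ → ℝ} {x : Fin n → ℝ} (hf0 : f 0 = 0) (hx : x ∈ Pol n f)
    (S : Finset (Fin n)) : (∑ i ∈ S, x i) ≤ f S.card := by
  by_cases h0 : S = ∅
  · simp [h0, hf0]
  by_cases h1 : S = Finset.univ
  · subst h1
    rw [Finset.card_univ, Fintype.card_fin]
    exact le_of_eq hx.1
  exact hx.2 S h0 h1

lemma tight_chain {n : ℕ} {f : ℕ → ℝ} {x : Fin n → ℝ}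
    (hf0 : f 0 = 0)
    (hconc : ∀ a b c e : ℕ, a ≤ b → b ≤ c → c ≤ e → e ≤ n → a + e = b + c → a < b →
      f a + f e < f b + f c)
    (hx : x ∈ Pol n f) {S T : Finset (Fin n)}
    (hS : S ∈ TightF n f x) (hT : T ∈ TightF n f x) : S ⊆ T ∨ T ⊆ S := by
  have aux : ∀ S T : Finset (Fin n), S ∈ TightF n f x → T ∈ TightF n f x →
      S.card ≤ T.card → ¬ S ⊆ T → ¬ T ⊆ S → False := by
    intro S T hS hT hcard hST hTS
    rw [mem_TightF] at hS hT
    have hiS : S ∩ T ⊂ S := by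
      constructor
      · exact Finset.inter_subset_left
      · intro h
        exact hST (fun i hi => Finset.mem_of_mem_inter_right (h hi))
    have ha : (S ∩ T).card < S.card := Finset.card_lt_card hiS
    have hce : T.card ≤ (S ∪ T).card := Finset.card_le_card Finset.subset_union_right
    have hen : (S ∪ T).card ≤ n := by
      have := Finset.card_le_univ (S ∪ T)
      simpa [Finset.card_univ] using this
    have hsum : (S ∩ T).card + (S ∪ T).card = S.card + T.card := by
      rw [add_comm]
      exact Finset.card_union_add_card_inter S T
    have h1 : f (S ∩ T).card + f (S ∪ T).card < f S.card + f T.card :=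
      hconc _ _ _ _ (le_of_lt ha) hcard hce hen hsum ha
    have h2 : (∑ i ∈ S ∪ T, x i) + (∑ i ∈ S ∩ T, x i) = (∑ i ∈ S, x i) + (∑ i ∈ T, x i) :=
      Finset.sum_union_inter
    have h3 : (∑ i ∈ S ∪ T, x i) ≤ f (S ∪ T).card := Pol.bound hf0 hx _
    have h4 : (∑ i ∈ S ∩ T, x i) ≤ f (S ∩ T).card := Pol.bound hf0 hx _
    rw [hS.2.2, hT.2.2] at h2
    linarith
  by_contra hcon
  push_neg at hcon
  rcases le_total S.card T.card with h | h
  · exact aux S T hS hT h hcon.1 hcon.2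
  · exact aux T S hT hS h hcon.2 hcon.1

lemma vertex_perm {n : ℕ} {f : ℕ → ℝ} {α : Fin n → ℝ} {x : Fin n → ℝ}
    (hf0 : f 0 = 0)
    (hα : ∀ p : Fin n, α p = f (n - (p : ℕ)) - f (n - 1 - (p : ℕ)))
    (hconc : ∀ a b c e : ℕ, a ≤ b → b ≤ c → c ≤ e → e ≤ n → a + e = b + c → a < b →
      f a + f e < f b + f c)
    (hx : x ∈ Pol n f)
    (hker : ∀ v : Fin n → ℝ, (∑ i, v i) = 0 →
      (∀ S ∈ TightF n f x, (∑ i ∈ S, v i) = 0) → v = 0) :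
    ∃ σ : Equiv.Perm (Fin n), x = fun i => α (σ i) := by
  classical
  set C : Finset (Finset (Fin n)) := insert Finset.univ (TightF n f x) with hC
  have chainC : ∀ S ∈ C, ∀ T ∈ C, S ⊆ T ∨ T ⊆ S := by
    intro S hS T hT
    rw [hC, Finset.mem_insert] at hS hT
    rcases hS with rfl | hS
    · right; exact Finset.subset_univ T
    rcases hT with rfl | hT
    · left; exact Finset.subset_univ S
    exact tight_chain hf0 hconc hx hS hT
  have sumC : ∀ S ∈ C, (∑ i ∈ S, x i) = f S.card := by
    intro S hS
    rw [hC, Finset.mem_insert] at hS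
    rcases hS with rfl | hS
    · rw [Finset.card_univ, Fintype.card_fin]; exact hx.1
    · exact (mem_TightF.mp hS).2.2
  -- minimal element of C containing i
  have hM : ∀ i : Fin n, ∃ M ∈ C, i ∈ M ∧ ∀ S ∈ C, i ∈ S → M ⊆ S := by
    intro i
    have hne : (C.filter (fun S => i ∈ S)).Nonempty :=
      ⟨Finset.univ, Finset.mem_filter.mpr ⟨Finset.mem_insert_self _ _, Finset.mem_univ i⟩⟩
    obtain ⟨M, hMmem, hMmin⟩ := Finset.exists_min_image _ (fun S => S.card) hne
    rw [Finset.mem_filter] at hMmem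
    refine ⟨M, hMmem.1, hMmem.2, ?_⟩
    intro S hS hiS
    have hS' : S ∈ C.filter (fun S => i ∈ S) := Finset.mem_filter.mpr ⟨hS, hiS⟩
    rcases chainC M hMmem.1 S hS with h | h
    · exact h
    · have : S = M := Finset.eq_of_subset_of_card_le h (hMmin S hS')
      rw [this]
  choose M hMC hMi hMmin using hM
  -- injectivity of M
  have Minj : Function.Injective M := by
    intro i j hij
    by_contra hne
    set v : Fin n → ℝ := Pi.single i 1 - Pi.single j 1 with hv
    have hsum : ∀ S : Finset (Fin n), (∑ k ∈ S, v k)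
        = (if i ∈ S then (1:ℝ) else 0) - (if j ∈ S then (1:ℝ) else 0) := by
      intro S
      rw [hv]
      simp only [Pi.sub_apply, Finset.sum_sub_distrib]
      congr 1 <;> · simp [Pi.single_apply, Finset.sum_ite_eq']
    have h0 : (∑ k, v k) = 0 := by
      rw [hsum]; simp
    have hT : ∀ S ∈ TightF n f x, (∑ k ∈ S, v k) = 0 := by
      intro S hS
      have hSC : S ∈ C := Finset.mem_insert_of_mem hS
      have hiff : i ∈ S ↔ j ∈ S := by
        constructor
        · intro h
          exact (hij ▸ hMmin i S hSC h) (hMi j)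
        · intro h
          exact (hij.symm ▸ hMmin j S hSC h) (hMi i)
      rw [hsum]
      by_cases h : i ∈ S
      · rw [if_pos h, if_pos (hiff.mp h)]; ring
      · rw [if_neg h, if_neg (fun hj => h (hiff.mpr hj))]; ring
    have := congrFun (hker v h0 hT) i
    rw [hv] at this
    simp [Pi.single_apply, hne] at this
  -- r is injective with range {1,...,n}
  set r : Fin n → ℕ := fun i => (M i).card with hr
  have hr1 : ∀ i, 1 ≤ r i := by
    intro i
    rw [hr]
    exact Finset.card_pos.mpr ⟨i, hMi i⟩
  have hrn : ∀ i, r i ≤ n := by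
    intro i
    have := Finset.card_le_univ (M i)
    simpa [Finset.card_univ] using this
  have rinj : Function.Injective r := by
    intro i j hij
    apply Minj
    rcases chainC (M i) (hMC i) (M j) (hMC j) with h | h
    · exact Finset.eq_of_subset_of_card_le h (le_of_eq hij.symm)
    · exact (Finset.eq_of_subset_of_card_le h (le_of_eq hij)).symm
  have himg : Finset.image r Finset.univ = Finset.Icc 1 n := by
    apply Finset.eq_of_subset_of_card_le
    · intro k hk
      rw [Finset.mem_image] at hk
      obtain ⟨i, _, rfl⟩ := hk
      exact Finset.mem_Icc.mpr ⟨hr1 i, hrn i⟩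
    · rw [Nat.card_Icc, Finset.card_image_of_injective _ rinj, Finset.card_univ,
        Fintype.card_fin]
      omega
  have hsurj : ∀ k : ℕ, 1 ≤ k → k ≤ n → ∃ j, r j = k := by
    intro k h1 h2
    have : k ∈ Finset.image r Finset.univ := himg ▸ Finset.mem_Icc.mpr ⟨h1, h2⟩
    rw [Finset.mem_image] at this
    obtain ⟨j, _, hj⟩ := this
    exact ⟨j, hj⟩
  -- the key computation
  have key : ∀ i, x i = f (r i) - f (r i - 1) := by
    intro i
    have h1 : (∑ k ∈ M i, x k) = f (r i) := sumC _ (hMC i)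
    have h2 : (∑ k ∈ (M i).erase i, x k) = f (r i - 1) := by
      by_cases hc : r i = 1
      · have : M i = {i} := by
          rw [hr] at hc
          obtain ⟨a, ha⟩ := Finset.card_eq_one.mp hc
          have := hMi i
          rw [ha] at this ⊢
          rw [Finset.mem_singleton] at this
          rw [this]
        rw [this]
        simp [hc, hf0]
      · have hk2 : 2 ≤ r i := by have := hr1 i; omega
        obtain ⟨j, hj⟩ := hsurj (r i - 1) (by omega) (by have := hrn i; omega)
        have hMji : M j ⊆ M i := by
          rcases chainC (M j) (hMC j) (M i) (hMC i) with h | h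
          · exact h
          · exfalso
            have h2 : r i ≤ r j := Finset.card_le_card h
            omega
        have hinotj : i ∉ M j := by
          intro hcon
          have h2 : r i ≤ r j := Finset.card_le_card (hMmin i (M j) (hMC j) hcon)
          omega
        have hMeq : M j = (M i).erase i := by
          apply Finset.eq_of_subset_of_card_le
          · intro k hk
            exact Finset.mem_erase.mpr ⟨fun h => hinotj (h ▸ hk), hMji hk⟩
          · rw [Finset.card_erase_of_mem (hMi i)]
            show r i - 1 ≤ r j
            omega
        rw [← hMeq, sumC _ (hMC j)]
        show f (r j) = f (r i - 1)
        rw [hj]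
    have h3 : (∑ k ∈ (M i).erase i, x k) + x i = ∑ k ∈ M i, x k :=
      Finset.sum_erase_add _ _ (hMi i)
    rw [h1, h2] at h3
    linarith
  -- build the permutation
  have hgoal : ∀ i, n - r i < n := by intro i; have := hr1 i; have := hrn i; omega
  set g : Fin n → Fin n := fun i => ⟨n - r i, hgoal i⟩ with hg
  have ginj : Function.Injective g := by
    intro i j hij
    apply rinj
    rw [hg] at hij
    have := Fin.mk.injEq (n - r i) (hgoal i) (n - r j) (hgoal j) ▸ hij
    have h1 := hrn i; have h2 := hrn j
    have : n - r i = n - r j := Fin.mk.inj_iff.mp hij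
    omega
  have gbij : Function.Bijective g := Finite.injective_iff_bijective.mp ginj
  refine ⟨Equiv.ofBijective g gbij, ?_⟩
  funext i
  have hgi : ((Equiv.ofBijective g gbij) i) = g i := rfl
  rw [key i, hgi, hα (g i)]
  have e1 : n - ((g i : ℕ)) = r i := by
    have h1 := hr1 i; have h2 := hrn i
    show n - (n - r i) = r i
    omega
  have e2 : n - 1 - ((g i : ℕ)) = r i - 1 := by
    have h1 := hr1 i; have h2 := hrn i
    show n - 1 - (n - r i) = r i - 1
    omega
  rw [e1, e2]

lemma perturb_one {n : ℕ} {f : ℕ → ℝ} {x : Fin n → ℝ} (hn : 2 ≤ n)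
    (hx : x ∈ Pol n f) {v : Fin n → ℝ} (hv : v ≠ 0) (hs : (∑ i, v i) = 0)
    (ht : ∀ S ∈ TightF n f x, (∑ i ∈ S, v i) = 0) :
    ∃ t : ℝ, 0 < t ∧ (x + t • v) ∈ Pol n f ∧
      (TightF n f x).card < (TightF n f (x + t • v)).card := by
  classical
  -- an index with positive coordinate
  have hipos : ∃ i, 0 < v i := by
    by_contra hcon
    push_neg at hcon
    apply hv
    funext i
    have h0 : (∑ i, -v i) = 0 := by rw [Finset.sum_neg_distrib, hs, neg_zero]
    have := (Finset.sum_eq_zero_iff_of_nonneg (fun j _ => neg_nonneg.mpr (hcon j))).mp h0 i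
      (Finset.mem_univ i)
    have := neg_eq_zero.mp this
    simp [this]
  obtain ⟨i0, hi0⟩ := hipos
  set A : Finset (Finset (Fin n)) :=
    Finset.univ.filter (fun S => S ≠ ∅ ∧ S ≠ Finset.univ ∧ 0 < ∑ i ∈ S, v i) with hA
  have hAne : A.Nonempty := by
    refine ⟨{i0}, ?_⟩
    rw [hA, Finset.mem_filter]
    refine ⟨Finset.mem_univ _, Finset.singleton_ne_empty _, ?_, by simpa using hi0⟩
    intro h
    have := congrArg Finset.card h
    rw [Finset.card_singleton, Finset.card_univ, Fintype.card_fin] at this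
    omega
  obtain ⟨S0, hS0A, hS0min⟩ := Finset.exists_min_image A
    (fun S => (f S.card - ∑ i ∈ S, x i) / (∑ i ∈ S, v i)) hAne
  rw [hA, Finset.mem_filter] at hS0A
  obtain ⟨-, hS0ne, hS0nu, hS0v⟩ := hS0A
  set t : ℝ := (f S0.card - ∑ i ∈ S0, x i) / (∑ i ∈ S0, v i) with hT
  have hS0nt : S0 ∉ TightF n f x := by
    intro hcon
    rw [ht S0 hcon] at hS0v
    exact lt_irrefl _ hS0v
  have hS0lt : (∑ i ∈ S0, x i) < f S0.card := by
    rcases lt_or_eq_of_le (hx.2 S0 hS0ne hS0nu) with h | h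
    · exact h
    · exact absurd (mem_TightF.mpr ⟨hS0ne, hS0nu, h⟩) hS0nt
  have htpos : 0 < t := div_pos (by linarith) hS0v
  have hysum : ∀ S : Finset (Fin n),
      (∑ i ∈ S, (x + t • v) i) = (∑ i ∈ S, x i) + t * (∑ i ∈ S, v i) := by
    intro S
    simp only [Pi.add_apply, Pi.smul_apply, smul_eq_mul, Finset.sum_add_distrib,
      Finset.mul_sum]
  have hyP : (x + t • v) ∈ Pol n f := by
    constructor
    · rw [hysum Finset.univ, hx.1, hs]; ring
    · intro S hSne hSnu
      rw [hysum S]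
      rcases le_or_gt (∑ i ∈ S, v i) 0 with h | h
      · have : t * (∑ i ∈ S, v i) ≤ 0 := mul_nonpos_of_nonneg_of_nonpos htpos.le h
        have := hx.2 S hSne hSnu
        linarith
      · have hSA : S ∈ A := by
          rw [hA, Finset.mem_filter]
          exact ⟨Finset.mem_univ _, hSne, hSnu, h⟩
        have := hS0min S hSA
        have h2 : t * (∑ i ∈ S, v i) ≤ f S.card - ∑ i ∈ S, x i := by
          rw [← le_div_iff₀ h]
          exact this
        linarith
  have hsub : TightF n f x ⊆ TightF n f (x + t • v) := by
    intro S hS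
    rw [mem_TightF] at hS ⊢
    refine ⟨hS.1, hS.2.1, ?_⟩
    rw [hysum S, ht S (mem_TightF.mpr hS), hS.2.2]; ring
  have hS0y : S0 ∈ TightF n f (x + t • v) := by
    rw [mem_TightF]
    refine ⟨hS0ne, hS0nu, ?_⟩
    rw [hysum S0, hT, div_mul_cancel₀ _ (ne_of_gt hS0v)]
    ring
  refine ⟨t, htpos, hyP, Finset.card_lt_card ?_⟩
  rw [Finset.ssubset_iff_of_subset hsub]
  exact ⟨S0, hS0y, hS0nt⟩

lemma pol_subset_hull {n : ℕ} {f : ℕ → ℝ} {α : Fin n → ℝ} (hn : 2 ≤ n)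
    (hf0 : f 0 = 0)
    (hα : ∀ p : Fin n, α p = f (n - (p : ℕ)) - f (n - 1 - (p : ℕ)))
    (hconc : ∀ a b c e : ℕ, a ≤ b → b ≤ c → c ≤ e → e ≤ n → a + e = b + c → a < b →
      f a + f e < f b + f c) :
    Pol n f ⊆ convexHull ℝ
      {y : Fin n → ℝ | ∃ σ : Equiv.Perm (Fin n), y = fun i => α (σ i)} := by
  classical
  set V : Set (Fin n → ℝ) := {y | ∃ σ : Equiv.Perm (Fin n), y = fun i => α (σ i)} with hV
  set total : ℕ := Fintype.card (Finset (Fin n)) with htotal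
  have hcardlt : ∀ x : Fin n → ℝ, (TightF n f x).card < total := by
    intro x
    rw [htotal, ← Finset.card_univ]
    apply Finset.card_lt_card
    rw [Finset.ssubset_univ_iff]
    intro hcon
    have : (∅ : Finset (Fin n)) ∈ TightF n f x := hcon ▸ Finset.mem_univ _
    exact (mem_TightF.mp this).1 rfl
  suffices H : ∀ (N : ℕ) (x : Fin n → ℝ), x ∈ Pol n f →
      total - (TightF n f x).card ≤ N → x ∈ convexHull ℝ V by
    intro x hx
    exact H total x hx (Nat.sub_le _ _)
  intro N
  induction N with
  | zero =>
    intro x hx hm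
    exact absurd hm (by have := hcardlt x; omega)
  | succ N ih =>
    intro x hx hm
    by_cases hker : ∀ v : Fin n → ℝ, (∑ i, v i) = 0 →
        (∀ S ∈ TightF n f x, (∑ i ∈ S, v i) = 0) → v = 0
    · obtain ⟨σ, hσ⟩ := vertex_perm hf0 hα hconc hx hker
      exact subset_convexHull ℝ V ⟨σ, hσ⟩
    · push_neg at hker
      obtain ⟨v, hs, ht, hv⟩ := hker
      obtain ⟨t1, ht1, hy, hcy⟩ := perturb_one hn hx hv hs ht
      have hvneg : (-v : Fin n → ℝ) ≠ 0 := neg_ne_zero.mpr hv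
      have hsneg : (∑ i, (-v) i) = 0 := by
        simp only [Pi.neg_apply, Finset.sum_neg_distrib, hs, neg_zero]
      have htneg : ∀ S ∈ TightF n f x, (∑ i ∈ S, (-v) i) = 0 := by
        intro S hS
        simp only [Pi.neg_apply, Finset.sum_neg_distrib, ht S hS, neg_zero]
      obtain ⟨t2, ht2, hz, hcz⟩ := perturb_one hn hx hvneg hsneg htneg
      set y := x + t1 • v with hy'
      set z := x + t2 • (-v) with hz'
      have hyhull : y ∈ convexHull ℝ V := by
        apply ih y hy
        have := hcardlt y
        omega
      have hzhull : z ∈ convexHull ℝ V := by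
        apply ih z hz
        have := hcardlt z
        omega
      have hspos : (0:ℝ) < t1 + t2 := by linarith
      have ha : (0:ℝ) ≤ t2 / (t1 + t2) := div_nonneg ht2.le hspos.le
      have hb : (0:ℝ) ≤ t1 / (t1 + t2) := div_nonneg ht1.le hspos.le
      have hab : t2 / (t1 + t2) + t1 / (t1 + t2) = 1 := by
        field_simp
        ring
      have hxeq : x = (t2 / (t1 + t2)) • y + (t1 / (t1 + t2)) • z := by
        funext i
        rw [hy', hz']
        simp only [Pi.add_apply, Pi.smul_apply, Pi.neg_apply, smul_eq_mul]
        field_simp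
        ring
      rw [hxeq]
      exact (convex_convexHull ℝ V) hyhull hzhull ha hb hab


lemma hull_subset_pol {n : ℕ} {f : ℕ → ℝ} {α : Fin n → ℝ}
    (hf0 : f 0 = 0)
    (hα : ∀ p : Fin n, α p = f (n - (p : ℕ)) - f (n - 1 - (p : ℕ)))
    (hδle : ∀ j k : ℕ, j ≤ k → k < n → f (k+1) - f k ≤ f (j+1) - f j) :
    convexHull ℝ {y : Fin n → ℝ | ∃ σ : Equiv.Perm (Fin n), y = fun i => α (σ i)}
      ⊆ Pol n f := by
  apply convexHull_min
  · rintro y ⟨σ, rfl⟩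
    constructor
    · rw [Equiv.sum_comp σ α]
      exact sum_alpha_univ hf0 hα
    · intro S hSne hSnu
      have h1 : (∑ i ∈ S, α (σ i)) = ∑ p ∈ S.image σ, α p := by
        rw [Finset.sum_image (fun a _ b _ h => σ.injective h)]
      rw [h1]
      have h2 := sum_alpha_le hf0 hα hδle (S.image σ)
      rwa [Finset.card_image_of_injective _ σ.injective] at h2
  · intro x hx y hy a b ha hb hab
    constructor
    · simp only [Pi.add_apply, Pi.smul_apply, smul_eq_mul, Finset.sum_add_distrib,
        ← Finset.mul_sum, hx.1, hy.1]
      rw [← add_mul, hab, one_mul]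
    · intro S hSne hSnu
      simp only [Pi.add_apply, Pi.smul_apply, smul_eq_mul, Finset.sum_add_distrib,
        ← Finset.mul_sum]
      have h1 := mul_le_mul_of_nonneg_left (hx.2 S hSne hSnu) ha
      have h2 := mul_le_mul_of_nonneg_left (hy.2 S hSne hSnu) hb
      have h3 : a * f S.card + b * f S.card = f S.card := by
        rw [← add_mul, hab, one_mul]
      linarith

/-- Proof of Theorem `thm:bary1` (key facts): for positive chiseling distances with
`ε₁ < 1/2` and `εᵢ < ε_{i−1}/2`, the sequence
`α = (ε_d, ε_{d−1}−ε_d, …, ε₁−ε₂, 1−ε₁)` is strictly increasing, the set function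
`b(S) = 1 − ε_{|S|}` (with `b(∅)=0`, `b([d+1])=1`) is submodular, and the polytope
`{x : ⟨𝟙,x⟩ = 1, ⟨e_S,x⟩ ≤ 1 − ε_{|S|}}` is the permutohedron `Perm(α)`. -/
theorem chiseled_simplex_is_permutohedron (d : ℕ) (hd : 1 ≤ d) (ε : ℕ → ℝ)
    (hpos : ∀ i, 1 ≤ i → i ≤ d → 0 < ε i)
    (h1 : ε 1 < 1/2)
    (hhalf : ∀ i, 2 ≤ i → i ≤ d → ε i < ε (i-1) / 2)
    (α : Fin (d+1) → ℝ)
    (hα : ∀ p : Fin (d+1),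
      α p = epsExt d ε (d - (p : ℕ)) - epsExt d ε (d - (p : ℕ) + 1)) :
    StrictMono α ∧
    (∀ S T : Finset (Fin (d+1)),
      chiselFn d ε (S ∪ T) + chiselFn d ε (S ∩ T) ≤ chiselFn d ε S + chiselFn d ε T) ∧
    {x : Fin (d+1) → ℝ | (∑ i, x i) = 1 ∧
        ∀ S : Finset (Fin (d+1)), S ≠ ∅ → S ≠ Finset.univ →
          (∑ i ∈ S, x i) ≤ 1 - ε S.card}
      = convexHull ℝ
          {y : Fin (d+1) → ℝ | ∃ σ : Equiv.Perm (Fin (d+1)), y = fun i => α (σ i)} := by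
  classical
  set f : ℕ → ℝ := fun k => 1 - epsExt d ε k with hf
  have hnn : ∀ j, 0 ≤ epsExt d ε j := by
    intro j
    unfold epsExt
    by_cases h0 : j = 0
    · simp [h0]
    by_cases h1 : j ≤ d
    · simp [h0, h1]
      exact (hpos j (by omega) h1).le
    · simp [h0, h1]
  have hf0 : f 0 = 0 := by simp [hf, epsExt]
  have hfd1 : f (d + 1) = 1 := by
    have : epsExt d ε (d + 1) = 0 := by
      unfold epsExt
      simp
    simp [hf, this]
  set g : ℕ → ℝ := fun k => epsExt d ε k - epsExt d ε (k + 1) with hg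
  have hfg : ∀ k, f (k + 1) - f k = g k := by
    intro k
    simp only [hf, hg]
    ring
  have adj : ∀ k, 1 ≤ k → k ≤ d → g k < g (k - 1) := by
    intro k hk1 hkd
    have hek : epsExt d ε k = ε k := by
      unfold epsExt
      rw [if_neg (by omega), if_pos hkd]
    by_cases hke : k = 1
    · subst hke
      have he0 : epsExt d ε 0 = 1 := by unfold epsExt; rw [if_pos rfl]
      have h2nn := hnn 2
      simp only [hg, Nat.sub_self, he0, hek]
      linarith
    · have hk2 : 2 ≤ k := by omega
      have hek1 : epsExt d ε (k - 1) = ε (k - 1) := by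
        unfold epsExt
        rw [if_neg (by omega), if_pos (by omega)]
      have hh := hhalf k hk2 hkd
      have hnn1 := hnn (k + 1)
      have hsub : k - 1 + 1 = k := by omega
      simp only [hg, hek, hek1, hsub]
      linarith
  have chain : ∀ k, k < d + 1 → ∀ j, j < k → g k < g j := by
    intro k
    induction k with
    | zero => intro _ j h; omega
    | succ k ih =>
      intro hk j hj
      have hadj : g (k + 1) < g k := by
        have := adj (k + 1) (by omega) (by omega)
        simpa using this
      rcases Nat.lt_succ_iff_lt_or_eq.mp hj with h | rfl
      · exact lt_trans hadj (ih (by omega) j h)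
      · exact hadj
  have hδ : ∀ j k : ℕ, j < k → k < (d+1) → f (k+1) - f k < f (j+1) - f j := by
    intro j k hjk hkn
    rw [hfg, hfg]
    exact chain k hkn j hjk
  have hδle : ∀ j k : ℕ, j ≤ k → k < (d+1) → f (k+1) - f k ≤ f (j+1) - f j := by
    intro j k hjk hkn
    rcases eq_or_lt_of_le hjk with rfl | h
    · exact le_refl _
    · exact (hδ j k h hkn).le
  have hα' : ∀ p : Fin (d+1), α p = f ((d+1) - (p : ℕ)) - f (d - (p : ℕ)) := by
    intro p
    have hp : (p : ℕ) ≤ d := by omega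
    have e1 : (d+1) - (p : ℕ) = (d - (p : ℕ)) + 1 := by omega
    have e2 : d - (p : ℕ) = d - (p : ℕ) := by omega
    rw [hα p, e1, e2]
    simp only [hf]
    ring
  have hconc : ∀ a b c e : ℕ, a ≤ b → b ≤ c → c ≤ e → e ≤ (d+1) → a + e = b + c → a < b →
      f a + f e < f b + f c := fun a b c e h1 h2 h3 h4 h5 h6 =>
    conc_of_delta hδ h1 h2 h3 h4 h5 h6
  have hconcle : ∀ a b c e : ℕ, a ≤ b → b ≤ c → c ≤ e → e ≤ (d+1) → a + e = b + c →
      f a + f e ≤ f b + f c := by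
    intro a b c e h1 h2 h3 h4 h5
    rcases eq_or_lt_of_le h1 with rfl | h
    · have : e = c := by omega
      rw [this]
    · exact (hconc a b c e h1 h2 h3 h4 h5 h).le
  -- Part 1 : strict monotonicity
  have part1 : StrictMono α := by
    intro p q hpq
    have hp : (p : ℕ) ≤ d := by omega
    have hq : (q : ℕ) ≤ d := by omega
    have hpq' : (p : ℕ) < (q : ℕ) := hpq
    rw [hα p, hα q]
    have h1 : d - (p : ℕ) < d + 1 := by omega
    have h2 : d - (q : ℕ) < d - (p : ℕ) := by omega
    exact chain (d - (p : ℕ)) h1 (d - (q : ℕ)) h2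
  -- chiselFn = f ∘ card
  have chisel_eq : ∀ S : Finset (Fin (d+1)), chiselFn d ε S = f S.card := by
    intro S
    unfold chiselFn
    by_cases h0 : S = ∅
    · simp [h0, hf, epsExt]
    by_cases h1 : S = Finset.univ
    · subst h1
      rw [if_neg h0, if_pos rfl, Finset.card_univ, Fintype.card_fin, hfd1]
    · simp only [h0, h1, if_false]
      have hc1 : 1 ≤ S.card := Finset.card_pos.mpr (Finset.nonempty_of_ne_empty h0)
      have hcd : S.card ≤ d := by
        have := Finset.card_lt_card (Finset.ssubset_univ_iff.mpr h1)
        rw [Finset.card_univ, Fintype.card_fin] at this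
        omega
      have : epsExt d ε S.card = ε S.card := by
        unfold epsExt
        rw [if_neg (by omega), if_pos hcd]
      simp [hf, this]
  -- Part 2 : submodularity
  have part2 : ∀ S T : Finset (Fin (d+1)),
      chiselFn d ε (S ∪ T) + chiselFn d ε (S ∩ T) ≤ chiselFn d ε S + chiselFn d ε T := by
    have aux : ∀ S T : Finset (Fin (d+1)), S.card ≤ T.card →
        chiselFn d ε (S ∪ T) + chiselFn d ε (S ∩ T) ≤ chiselFn d ε S + chiselFn d ε T := by
      intro S T hc
      rw [chisel_eq, chisel_eq, chisel_eq, chisel_eq]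
      have h1 : (S ∩ T).card ≤ S.card := Finset.card_le_card Finset.inter_subset_left
      have h2 : T.card ≤ (S ∪ T).card := Finset.card_le_card Finset.subset_union_right
      have h3 : (S ∪ T).card ≤ (d+1) := by
        have := Finset.card_le_univ (S ∪ T)
        simpa using this
      have h4 : (S ∩ T).card + (S ∪ T).card = S.card + T.card := by
        rw [add_comm]
        exact Finset.card_union_add_card_inter S T
      have := hconcle _ _ _ _ h1 hc h2 h3 h4
      linarith
    intro S T
    rcases le_total S.card T.card with h | h
    · exact aux S T h
    · have := aux T S h
      rw [Finset.union_comm, Finset.inter_comm] at this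
      linarith
  -- Part 3 : polytope equality
  have hPol : {x : Fin (d+1) → ℝ | (∑ i, x i) = 1 ∧
      ∀ S : Finset (Fin (d+1)), S ≠ ∅ → S ≠ Finset.univ →
        (∑ i ∈ S, x i) ≤ 1 - ε S.card} = Pol (d+1) f := by
    ext x
    have hfc : ∀ S : Finset (Fin (d+1)), S ≠ ∅ → S ≠ Finset.univ →
        f S.card = 1 - ε S.card := by
      intro S h0 h1
      have hc1 : 1 ≤ S.card := Finset.card_pos.mpr (Finset.nonempty_of_ne_empty h0)
      have hcd : S.card ≤ d := by
        have := Finset.card_lt_card (Finset.ssubset_univ_iff.mpr h1)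
        rw [Finset.card_univ, Fintype.card_fin] at this
        omega
      have : epsExt d ε S.card = ε S.card := by
        unfold epsExt
        rw [if_neg (by omega), if_pos hcd]
      simp [hf, this]
    constructor
    · intro hx
      refine ⟨by rw [hfd1]; exact hx.1, ?_⟩
      intro S h0 h1
      rw [hfc S h0 h1]
      exact hx.2 S h0 h1
    · intro hx
      refine ⟨by rw [← hfd1]; exact hx.1, ?_⟩
      intro S h0 h1
      rw [← hfc S h0 h1]
      exact hx.2 S h0 h1
  refine ⟨part1, part2, ?_⟩
  rw [hPol]
  apply Set.Subset.antisymm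
  · exact pol_subset_hull (by omega) hf0 hα' hconc
  · exact hull_subset_pol hf0 hα' hδle
end

section
/- Let (π,τ₁), (π,τ₂) ∈ S_{d+1} × S_d with τ₂ = (r, r+1)∘τ₁ for some 1 ≤ r ≤ d−1. Then the maximal chains ch(π,τ₁) and ch(π,τ₂) in O_{d+1} agree in all ranks except rank r, and the rank-(r−1), rank-r (two versions), and rank-(r+1) elements T_{r−1}, T_r, T_r', T_{r+1} satisfy e_{T_{r+1}} + e_{T_{r−1}} = e_{T_r} + e_{T_r'} in ℝ^{d+1}. -/
lemma swapval (d : ℕ) (τ₁ τ₂ : Equiv.Perm (Fin d)) (ρ : Fin d) (h : (ρ : ℕ) + 1 < d)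
    (hτ : τ₂ = Equiv.swap ρ ⟨(ρ : ℕ) + 1, h⟩ * τ₁) (j : Fin d) :
    ((τ₁ j : ℕ) = ρ ∧ (τ₂ j : ℕ) = (ρ : ℕ) + 1) ∨
    ((τ₁ j : ℕ) = (ρ : ℕ) + 1 ∧ (τ₂ j : ℕ) = ρ) ∨
    ((τ₁ j : ℕ) ≠ ρ ∧ (τ₁ j : ℕ) ≠ (ρ : ℕ) + 1 ∧ (τ₂ j : ℕ) = (τ₁ j : ℕ)) := by
  subst hτ
  simp only [Equiv.Perm.mul_apply]
  by_cases h1 : τ₁ j = ρ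
  · left; rw [h1, Equiv.swap_apply_left]; exact ⟨rfl, rfl⟩
  by_cases h2 : τ₁ j = ⟨(ρ : ℕ) + 1, h⟩
  · right; left; rw [h2, Equiv.swap_apply_right]; exact ⟨rfl, rfl⟩
  · right; right
    rw [Equiv.swap_apply_of_ne_of_ne h1 h2]
    exact ⟨fun hc => h1 (Fin.ext hc), fun hc => h2 (Fin.ext hc), rfl⟩

/-- Lemma `lem:adjch`/`lem:adjchineq` (diamond situation): if `τ₂ = (r, r+1)∘τ₁`
(0-indexed: swap of labels `ρ` and `ρ+1`, with rank `r = ρ+1`), then the maximal chains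
`ch(π,τ₁)` and `ch(π,τ₂)` agree at all ranks except rank `r`, and the elements
`T_{r−1}, T_r, T_r', T_{r+1}` satisfy `e_{T_{r+1}} + e_{T_{r−1}} = e_{T_r} + e_{T_r'}`. -/
theorem adjacent_chains_diamond (d : ℕ) (π : Equiv.Perm (Fin (d+1)))
    (τ₁ τ₂ : Equiv.Perm (Fin d)) (ρ : Fin d) (h : (ρ : ℕ) + 1 < d)
    (hτ : τ₂ = Equiv.swap ρ ⟨(ρ : ℕ) + 1, h⟩ * τ₁) :
    (∀ s : ℕ, s ≤ d → s ≠ (ρ : ℕ) + 1 → eTvec d π τ₁ s = eTvec d π τ₂ s) ∧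
    ((fun x => eTvec d π τ₁ ((ρ : ℕ) + 2) x + eTvec d π τ₁ (ρ : ℕ) x)
      = fun x => eTvec d π τ₁ ((ρ : ℕ) + 1) x + eTvec d π τ₂ ((ρ : ℕ) + 1) x) := by
  constructor
  · intro s _ hsne
    funext x
    simp only [eTvec]
    congr 2
    apply congrArg Finset.card
    apply Finset.filter_congr
    intro j _
    rcases swapval d τ₁ τ₂ ρ h hτ j with ⟨h1, h2⟩ | ⟨h1, h2⟩ | ⟨h1, h2, h3⟩ <;>
      constructor <;> rintro ⟨ha, hb⟩ <;> exact ⟨ha, by omega⟩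
  · funext x
    simp only [eTvec]
    have key : (Finset.univ.filter
          fun j : Fin d => (j : ℕ) < (π x : ℕ) ∧ (ρ : ℕ) + 2 ≤ (τ₁ j : ℕ)).card +
        (Finset.univ.filter
          fun j : Fin d => (j : ℕ) < (π x : ℕ) ∧ (ρ : ℕ) ≤ (τ₁ j : ℕ)).card =
        (Finset.univ.filter
          fun j : Fin d => (j : ℕ) < (π x : ℕ) ∧ (ρ : ℕ) + 1 ≤ (τ₁ j : ℕ)).card +
        (Finset.univ.filter
          fun j : Fin d => (j : ℕ) < (π x : ℕ) ∧ (ρ : ℕ) + 1 ≤ (τ₂ j : ℕ)).card := by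
      simp only [Finset.card_filter]
      rw [← Finset.sum_add_distrib, ← Finset.sum_add_distrib]
      apply Finset.sum_congr rfl
      intro j _
      rcases swapval d τ₁ τ₂ ρ h hτ j with ⟨h1, h2⟩ | ⟨h1, h2⟩ | ⟨h1, h2, h3⟩ <;>
        split_ifs <;> omega
    have := congrArg (Nat.cast : ℕ → ℝ) key
    push_cast at this
    linarith
end

section
/- Let 0 < ε_1 < 1/4 and ε_i < ε_{i-1}/2 for 2 ≤ i ≤ d. Then β = (ε_2 − ε_1, ε_3 − ε_2, ..., ε_d − ε_{d-1}, −ε_d) ∈ ℝ^d is strictly increasing and every entry has absolute value strictly less than 1/4; moreover with α = (1, 2, ..., d+1), the pair (M,N) = (1,1) is an appropriate choice for (α,β), i.e., for every τ ∈ S_d the sequence i ↦ α_i + β_{τ(i-1)} − β_{τ(i)} (with β_{τ(0)} = β_{τ(d+1)} = 0) is strictly increasing in i. -/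
/-- `betaExt d β τ m` is `β_{τ(m)}` (1-indexed) for `1 ≤ m ≤ d`, with the convention
`β_{τ(0)} = β_{τ(d+1)} = 0`. -/
noncomputable def betaExt (d : ℕ) (β : Fin d → ℝ) (τ : Equiv.Perm (Fin d)) (m : ℕ) : ℝ :=
  if h : 1 ≤ m ∧ m ≤ d then β (τ ⟨m - 1, by omega⟩) else 0

/-- Proof of Theorem `thm:bary2` (key facts): for positive chiseling distances with
`ε₁ < 1/4` and `εᵢ < ε_{i−1}/2`, the sequence
`β = (ε₂−ε₁, ε₃−ε₂, …, ε_d−ε_{d−1}, −ε_d)` is strictly increasing with all entries of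
absolute value `< 1/4`, and with `α = (1,2,…,d+1)` the pair `(M,N) = (1,1)` is an
appropriate choice for `(α,β)`: for every `τ ∈ S_d` the sequence
`i ↦ αᵢ + β_{τ(i−1)} − β_{τ(i)}` (with `β_{τ(0)} = β_{τ(d+1)} = 0`) is strictly increasing. -/
theorem appropriate_choice_for_bary (d : ℕ) (hd : 1 ≤ d) (ε : ℕ → ℝ)
    (hpos : ∀ i, 1 ≤ i → i ≤ d → 0 < ε i)
    (h1 : ε 1 < 1/4)
    (hhalf : ∀ i, 2 ≤ i → i ≤ d → ε i < ε (i-1) / 2)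
    (β : Fin d → ℝ)
    (hβ : ∀ p : Fin d,
      β p = (if (p : ℕ) + 2 ≤ d then ε ((p : ℕ) + 2) else 0) - ε ((p : ℕ) + 1)) :
    StrictMono β ∧
    (∀ p : Fin d, |β p| < 1/4) ∧
    (∀ τ : Equiv.Perm (Fin d), StrictMono fun i : Fin (d+1) =>
      ((i : ℕ) + 1 : ℝ) + (betaExt d β τ (i : ℕ) - betaExt d β τ ((i : ℕ) + 1))) := by
  -- ε is strictly decreasing step by step
  have hstep : ∀ i, 2 ≤ i → i ≤ d → ε i < ε (i-1) := by
    intro i h2 hid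
    have := hhalf i h2 hid
    have hp := hpos (i-1) (by omega) (by omega)
    linarith
  -- antitone
  have hant : ∀ i j, 1 ≤ i → i ≤ j → j ≤ d → ε j ≤ ε i := by
    intro i j hi hij hjd
    induction j, hij using Nat.le_induction with
    | base => exact le_rfl
    | succ n hn ih =>
      have h1 : ε (n+1) < ε n := by
        have := hstep (n+1) (by omega) hjd
        simpa using this
      have := ih (by omega)
      linarith
  have hlt : ∀ i, 1 ≤ i → i ≤ d → ε i < 1/4 := by
    intro i hi hid
    calc ε i ≤ ε 1 := hant 1 i le_rfl hi hid
    _ < 1/4 := h1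
  -- bounds on β
  have hβbound : ∀ p : Fin d, -(1/4) < β p ∧ β p < 0 := by
    intro p
    rw [hβ p]
    have hp1 : 0 < ε ((p:ℕ)+1) := hpos _ (by omega) (by omega)
    have hp1' : ε ((p:ℕ)+1) < 1/4 := hlt _ (by omega) (by omega)
    split
    · next h =>
      have h2 := hhalf ((p:ℕ)+2) (by omega) h
      rw [show (p:ℕ)+2-1 = (p:ℕ)+1 from by omega] at h2
      have hp2 : 0 < ε ((p:ℕ)+2) := hpos _ (by omega) h
      constructor <;> linarith
    · constructor <;> linarith
  have habs : ∀ p : Fin d, |β p| < 1/4 := by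
    intro p
    have := hβbound p
    rw [abs_lt]
    constructor <;> linarith
  have hmono : StrictMono β := by
    intro p q hpq
    have hpq' : (p:ℕ) < (q:ℕ) := hpq
    have hq : (q:ℕ) < d := q.isLt
    -- β p = ε(p+2) - ε(p+1) since p+2 ≤ q+1 ≤ d
    have hpd : (p:ℕ) + 2 ≤ d := by omega
    have hβp : β p = ε ((p:ℕ)+2) - ε ((p:ℕ)+1) := by
      rw [hβ p, if_pos hpd]
    have h2 := hhalf ((p:ℕ)+2) (by omega) hpd
    rw [show (p:ℕ)+2-1 = (p:ℕ)+1 from by omega] at h2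
    have hpp : 0 < ε ((p:ℕ)+1) := hpos _ (by omega) (by omega)
    have hβp' : β p < -ε ((p:ℕ)+2) := by rw [hβp]; linarith
    have hantpq : ε ((q:ℕ)+1) ≤ ε ((p:ℕ)+2) := hant _ _ (by omega) (by omega) (by omega)
    have hβq : -ε ((q:ℕ)+1) ≤ β q := by
      rw [hβ q]
      split
      · next h => have := hpos ((q:ℕ)+2) (by omega) h; linarith
      · linarith
    linarith
  refine ⟨hmono, habs, ?_⟩
  intro τ
  have hb : ∀ m : ℕ, |betaExt d β τ m| < 1/4 := by
    intro m
    unfold betaExt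
    split
    · exact habs _
    · simp
  rw [Fin.strictMono_iff_lt_succ]
  intro i
  have h0 := abs_lt.mp (hb (i:ℕ))
  have h1' := abs_lt.mp (hb ((i:ℕ)+1))
  have h2' := abs_lt.mp (hb ((i:ℕ)+2))
  simp only [Fin.coe_castSucc, Fin.val_succ]
  push_cast
  linarith
end
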